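/- arXiv:2511.01760 — 5 statements merged into one kernel-verified Lean document; each statement's English description precedes it below -/
import Mathlib

section
/- Let (g,ν) be a positive Sonine pair, i.e. g : (0,∞) → [0,∞) is measurable, ν is a Borel measure on [0,∞) finite on compact subsets of (0,∞), and ∫_{(0,x)} g(x-t) ν(dt) = 1 for all x ∈ (0,1). Then g is locally integrable near 0 (∫₀¹ g(x) dx < ∞) and ν((0,1)) < ∞. -/
/-!
Integrating the Sonine identity `∫_{(0,x)} g(x-t) ν(dt) = 1` over `x ∈ (0,c)` and exchanging
the order of integration gives `∫_{(0,c)} G(c-t) ν(dt) = c`, where `G(y) = ∫₀^y g`. Since `G` is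
monotone, this yields `G(1/2) · ν((0,1/2)) ≤ 1` with both factors nonzero, so both are finite;
compactness of `[1/2,1]` then bounds `ν((0,1))`. For `g`, the bound
`∫_{(b,c)} g ≤ G(c-b)` (`0 ≤ b`, `c ≤ 1`) follows by inserting the identity at `y - v`
(`y = c - b`) as a factor `1` into `∫_{(0,y)} g(b+v) dv`, exchanging the integrals twice, and
bounding the resulting inner integral by the identity at `c - w`.
-/

open MeasureTheory Set Function
open scoped ENNReal

theorem setLIntegral_Ioo_comp_const_sub (h : ℝ → ℝ≥0∞) (a b : ℝ) :
    ∫⁻ x in Ioo a b, h (a + b - x) = ∫⁻ x in Ioo a b, h x := by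
  have := (Measure.measurePreserving_sub_left volume (a + b)).setLIntegral_comp_preimage_emb
    (measurableEmbedding_subLeft _) h (Ioo a b)
  rwa [preimage_const_sub_Ioo, add_sub_cancel_right, add_sub_cancel_left] at this

theorem setLIntegral_Ioo_eq_setLIntegral_Ioo_zero_add (h : ℝ → ℝ≥0∞) (b c : ℝ) :
    ∫⁻ x in Ioo b c, h x = ∫⁻ v in Ioo 0 (c - b), h (b + v) := by
  have := (measurePreserving_add_left volume b).setLIntegral_comp_preimage_emb
    (measurableEmbedding_addLeft b) h (Ioo b c)
  rwa [preimage_const_add_Ioo, sub_self, eq_comm] at this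

theorem lintegral_Ioo_lintegral_Ioo_sub_comm {μ ν : Measure ℝ} [SFinite μ] [SFinite ν]
    {H : ℝ → ℝ → ℝ≥0∞} (hH : Measurable (uncurry H)) (c : ℝ) :
    ∫⁻ x in Ioo 0 c, ∫⁻ y in Ioo 0 (c - x), H x y ∂ν ∂μ =
      ∫⁻ y in Ioo 0 c, ∫⁻ x in Ioo 0 (c - y), H x y ∂μ ∂ν := by
  have as_sections : ∀ (κ κ' : Measure ℝ) (F : ℝ → ℝ → ℝ≥0∞),
      ∫⁻ x in Ioo 0 c, ∫⁻ y in Ioo 0 (c - x), F x y ∂κ ∂κ' =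
        ∫⁻ x, ∫⁻ y, (Ioo 0 c).indicator (fun x => (Ioo 0 (c - x)).indicator (F x) y) x ∂κ ∂κ' := by
    intro κ κ' F
    rw [← lintegral_indicator measurableSet_Ioo]
    congr 1; ext x
    by_cases hx : x ∈ Ioo 0 c
    · simp only [indicator_of_mem hx, lintegral_indicator measurableSet_Ioo]
    · simp only [indicator_of_notMem hx, lintegral_zero]
  let T : Set (ℝ × ℝ) := {p | 0 < p.1 ∧ 0 < p.2 ∧ p.1 + p.2 < c}
  have hT : MeasurableSet T :=
    (measurableSet_lt measurable_const measurable_fst).inter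
      ((measurableSet_lt measurable_const measurable_snd).inter
        (measurableSet_lt (measurable_fst.add measurable_snd) measurable_const))
  have left_eq : ∀ x y, (Ioo 0 c).indicator (fun x => (Ioo 0 (c - x)).indicator (H x) y) x =
      T.indicator (uncurry H) (x, y) := by
    intro x y
    simp only [T, indicator_apply, mem_Ioo, mem_ofPred_eq, uncurry_apply_pair]
    split_ifs <;> first | rfl | (exfalso; grind)
  have right_eq : ∀ x y, (Ioo 0 c).indicator (fun y => (Ioo 0 (c - y)).indicator (H · y) x) y =
      T.indicator (uncurry H) (x, y) := by
    intro x y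
    simp only [T, indicator_apply, mem_Ioo, mem_ofPred_eq, uncurry_apply_pair]
    split_ifs <;> first | rfl | (exfalso; grind)
  rw [as_sections, as_sections]
  simp only [left_eq, right_eq]
  exact lintegral_lintegral_swap (hH.indicator hT).aemeasurable

theorem sigmaFinite_restrict_Ioo_of_isCompact {ν : Measure ℝ} {a b : ℝ}
    (hK : ∀ K : Set ℝ, K ⊆ Ioi a → IsCompact K → ν K < ⊤) :
    SigmaFinite (ν.restrict (Ioo a b)) := by
  refine ⟨⟨⟨fun n : ℕ => Iic a ∪ Ici (a + 1 / (n + 1)), fun _ => trivial, fun n => ?_, ?_⟩⟩⟩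
  · rw [Measure.restrict_apply' measurableSet_Ioo]
    have hsub : (Iic a ∪ Ici (a + 1 / (n + 1))) ∩ Ioo a b ⊆ Icc (a + 1 / (n + 1)) b := by
      rintro x ⟨hx | hx, hxa, hxb⟩
      · exact absurd hxa (not_lt.mpr hx)
      · exact ⟨hx, hxb.le⟩
    refine (measure_mono hsub).trans_lt (hK _ (fun x hx => ?_) isCompact_Icc)
    exact lt_of_lt_of_le (lt_add_of_pos_right a (by positivity)) hx.1
  · refine eq_univ_of_forall fun x => mem_iUnion.mpr ?_
    rcases le_or_gt x a with hx | hx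
    · exact ⟨0, Or.inl hx⟩
    · obtain ⟨n, hn⟩ := exists_nat_one_div_lt (sub_pos.mpr hx)
      exact ⟨n, Or.inr (by rw [mem_Ici]; linarith)⟩

theorem measure_Ioo_lt_top_of_isCompact {ν : Measure ℝ} {a b c : ℝ}
    (hK : ∀ K : Set ℝ, K ⊆ Ioi a → IsCompact K → ν K < ⊤) (hac : a < c)
    (hc : ν (Ioo a c) < ⊤) : ν (Ioo a b) < ⊤ := by
  have hsub : Ioo a b ⊆ Ioo a c ∪ Icc c b := fun x hx => by
    rcases lt_or_ge x c with h | h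
    exacts [Or.inl ⟨hx.1, h⟩, Or.inr ⟨h, hx.2.le⟩]
  calc ν (Ioo a b) ≤ ν (Ioo a c) + ν (Icc c b) := (measure_mono hsub).trans (measure_union_le _ _)
    _ < ⊤ := ENNReal.add_lt_top.mpr
        ⟨hc, hK _ (fun x hx => lt_of_lt_of_le hac hx.1) isCompact_Icc⟩

def IsSoninePair (f : ℝ → ℝ≥0∞) (μ : Measure ℝ) : Prop :=
  ∀ x ∈ Ioo (0 : ℝ) 1, ∫⁻ t in Ioo 0 x, f (x - t) ∂μ = 1

namespace IsSoninePair

variable {f : ℝ → ℝ≥0∞} {μ : Measure ℝ}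

theorem lintegral_primitive_sub_eq_ofReal [SFinite μ] (hf : Measurable f)
    (hS : IsSoninePair f μ) {c : ℝ} (hc : c ≤ 1) :
    ∫⁻ t in Ioo 0 c, (∫⁻ u in Ioo 0 (c - t), f u) ∂μ = ENNReal.ofReal c := by
  calc ∫⁻ t in Ioo 0 c, (∫⁻ u in Ioo 0 (c - t), f u) ∂μ
      = ∫⁻ t in Ioo 0 c, (∫⁻ v in Ioo 0 (c - t), f (c - v - t)) ∂μ := by
        refine lintegral_congr fun t => ?_
        rw [← setLIntegral_Ioo_comp_const_sub f 0 (c - t)]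
        simp only [zero_add, sub_right_comm]
    _ = ∫⁻ v in Ioo 0 c, ∫⁻ t in Ioo 0 (c - v), f (c - v - t) ∂μ :=
        (lintegral_Ioo_lintegral_Ioo_sub_comm (H := fun v t => f (c - v - t)) (by fun_prop) c).symm
    _ = ∫⁻ v in Ioo 0 c, 1 :=
        setLIntegral_congr_fun measurableSet_Ioo fun v hv =>
          hS (c - v) ⟨by linarith [hv.2], by linarith [hv.1]⟩
    _ = ENNReal.ofReal c := by rw [setLIntegral_one, Real.volume_Ioo, sub_zero]

theorem lintegral_Ioo_ne_zero [SFinite μ] (hf : Measurable f) (hS : IsSoninePair f μ) {a : ℝ}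
    (ha₀ : 0 < a) (ha₁ : a ≤ 1) : ∫⁻ u in Ioo 0 a, f u ≠ 0 := by
  intro hzero
  have hvanish : ∫⁻ t in Ioo 0 a, (∫⁻ u in Ioo 0 (a - t), f u) ∂μ = 0 := by
    refine le_antisymm ((setLIntegral_mono measurable_const fun t ht => ?_).trans_eq
      lintegral_zero) zero_le
    exact hzero ▸ lintegral_mono_set (Ioo_subset_Ioo_right (by linarith [ht.1]))
  rw [hS.lintegral_primitive_sub_eq_ofReal hf ha₁, ENNReal.ofReal_eq_zero] at hvanish
  linarith

theorem measure_Ioo_ne_zero (hS : IsSoninePair f μ) {a : ℝ} (ha : a ∈ Ioo (0 : ℝ) 1) :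
    μ (Ioo 0 a) ≠ 0 := by
  intro hzero
  have := hS a ha
  rw [Measure.restrict_eq_zero.mpr hzero, lintegral_zero_measure] at this
  exact zero_ne_one this

theorem lintegral_Ioo_mul_measure_Ioo_le_one [SFinite μ] (hf : Measurable f)
    (hS : IsSoninePair f μ) {a : ℝ} (ha : a ≤ 1 / 2) :
    (∫⁻ u in Ioo 0 a, f u) * μ (Ioo 0 a) ≤ 1 := by
  calc (∫⁻ u in Ioo 0 a, f u) * μ (Ioo 0 a)
      = ∫⁻ _ in Ioo 0 a, (∫⁻ u in Ioo 0 a, f u) ∂μ := (setLIntegral_const _ _).symm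
    _ ≤ ∫⁻ t in Ioo 0 a, (∫⁻ u in Ioo 0 (1 - t), f u) ∂μ :=
        setLIntegral_mono' measurableSet_Ioo fun t ht =>
          lintegral_mono_set (Ioo_subset_Ioo_right (by linarith [ht.2]))
    _ ≤ ∫⁻ t in Ioo 0 1, (∫⁻ u in Ioo 0 (1 - t), f u) ∂μ :=
        lintegral_mono_set (Ioo_subset_Ioo_right (by linarith))
    _ = 1 := by rw [hS.lintegral_primitive_sub_eq_ofReal hf le_rfl, ENNReal.ofReal_one]

theorem lintegral_Ioo_le_lintegral_Ioo_sub [SFinite μ] (hf : Measurable f)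
    (hS : IsSoninePair f μ) {b c : ℝ} (hb : 0 ≤ b) (hc : c ≤ 1) :
    ∫⁻ u in Ioo b c, f u ≤ ∫⁻ u in Ioo 0 (c - b), f u := by
  set y := c - b
  calc ∫⁻ u in Ioo b c, f u
      = ∫⁻ v in Ioo 0 y, f (b + v) := setLIntegral_Ioo_eq_setLIntegral_Ioo_zero_add f b c
    _ = ∫⁻ v in Ioo 0 y, ∫⁻ t in Ioo 0 (y - v), f (b + v) * f (y - v - t) ∂μ := by
        refine setLIntegral_congr_fun measurableSet_Ioo fun v hv => ?_
        rw [lintegral_const_mul _ (by fun_prop),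
          hS (y - v) ⟨by linarith [hv.2], by linarith [hv.1]⟩, mul_one]
    _ = ∫⁻ t in Ioo 0 y, (∫⁻ v in Ioo 0 (y - t), f (b + v) * f (y - v - t)) ∂μ :=
        lintegral_Ioo_lintegral_Ioo_sub_comm (H := fun v t => f (b + v) * f (y - v - t))
          (by fun_prop) y
    _ = ∫⁻ t in Ioo 0 y, (∫⁻ w in Ioo 0 (y - t), f (c - w - t) * f w) ∂μ := by
        refine lintegral_congr fun t => ?_
        rw [← setLIntegral_Ioo_comp_const_sub _ 0 (y - t)]
        refine lintegral_congr fun w => ?_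
        congr 2 <;> ring
    _ = ∫⁻ w in Ioo 0 y, ∫⁻ t in Ioo 0 (y - w), f (c - w - t) * f w ∂μ :=
        (lintegral_Ioo_lintegral_Ioo_sub_comm (H := fun w t => f (c - w - t) * f w)
          (by fun_prop) y).symm
    _ ≤ ∫⁻ w in Ioo 0 y, f w := by
        refine setLIntegral_mono hf fun w hw => ?_
        calc ∫⁻ t in Ioo 0 (y - w), f (c - w - t) * f w ∂μ
            ≤ ∫⁻ t in Ioo 0 (c - w), f (c - w - t) * f w ∂μ :=
              lintegral_mono_set (Ioo_subset_Ioo_right (by linarith))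
          _ = f w := by
              rw [lintegral_mul_const _ (by fun_prop),
                hS (c - w) ⟨by linarith [hw.2], by linarith [hw.1]⟩, one_mul]

theorem lintegral_Ioo_zero_one_le_two_mul [SFinite μ] (hf : Measurable f)
    (hS : IsSoninePair f μ) :
    ∫⁻ u in Ioo 0 1, f u ≤ 2 * ∫⁻ u in Ioo 0 (1 / 2), f u := by
  calc ∫⁻ u in Ioo 0 1, f u
      ≤ (∫⁻ u in Ioc 0 (1 / 2), f u) + ∫⁻ u in Ioo (1 / 2) 1, f u := by
        rw [← Ioc_union_Ioo_eq_Ioo (by norm_num : (0 : ℝ) ≤ 1 / 2) (by norm_num)]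
        exact lintegral_union_le _ _ _
    _ ≤ (∫⁻ u in Ioo 0 (1 / 2), f u) + ∫⁻ u in Ioo 0 (1 / 2), f u := by
        rw [← setLIntegral_congr Ioo_ae_eq_Ioc]
        exact add_le_add le_rfl ((hS.lintegral_Ioo_le_lintegral_Ioo_sub hf (b := 1 / 2)
          (by norm_num) le_rfl).trans_eq (by norm_num))
    _ = 2 * ∫⁻ u in Ioo 0 (1 / 2), f u := (two_mul _).symm

end IsSoninePair

theorem sonine_pair_local_integrability_general
    (g : ℝ → ℝ) (hg : Measurable g)
    (ν : Measure ℝ)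
    (hνK : ∀ K : Set ℝ, K ⊆ Set.Ioi 0 → IsCompact K → ν K < ⊤)
    (hSonine : ∀ x ∈ Set.Ioo (0:ℝ) 1,
      (∫⁻ t in Set.Ioo (0:ℝ) x, ENNReal.ofReal (g (x - t)) ∂ν) = 1) :
    (∫⁻ x in Set.Ioo (0:ℝ) 1, ENNReal.ofReal (g x)) < ⊤ ∧
      ν (Set.Ioo (0:ℝ) 1) < ⊤ := by
  have hf : Measurable fun x => ENNReal.ofReal (g x) := hg.ennreal_ofReal
  have : SigmaFinite (ν.restrict (Ioo 0 1)) := sigmaFinite_restrict_Ioo_of_isCompact hνK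
  have hS : IsSoninePair (fun x => ENNReal.ofReal (g x)) (ν.restrict (Ioo 0 1)) := fun x hx => by
    rw [Measure.restrict_restrict measurableSet_Ioo,
      inter_eq_left.mpr (Ioo_subset_Ioo_right hx.2.le), hSonine x hx]
  have hrestrict : ν.restrict (Ioo 0 1) (Ioo 0 (1 / 2)) = ν (Ioo 0 (1 / 2)) := by
    rw [Measure.restrict_apply measurableSet_Ioo,
      inter_eq_left.mpr (Ioo_subset_Ioo_right (by norm_num))]
  have hprod := (hS.lintegral_Ioo_mul_measure_Ioo_le_one hf le_rfl).trans_lt ENNReal.one_lt_top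
  have hG := ENNReal.lt_top_of_mul_ne_top_left hprod.ne
    (hS.measure_Ioo_ne_zero (by norm_num))
  have hνhalf := hrestrict ▸ ENNReal.lt_top_of_mul_ne_top_right hprod.ne
    (hS.lintegral_Ioo_ne_zero hf (by norm_num) (by norm_num))
  exact ⟨(hS.lintegral_Ioo_zero_one_le_two_mul hf).trans_lt (ENNReal.mul_lt_top (by simp) hG),
    measure_Ioo_lt_top_of_isCompact hνK (by norm_num) hνhalf⟩

/-- If `(g,ν)` is a positive Sonine pair (`g : (0,∞) → [0,∞)` measurable, `ν` a Borel
measure on `[0,∞)` finite on compact subsets of `(0,∞)`, and `∫_{(0,x)} g(x-t) ν(dt) = 1`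
for all `x ∈ (0,1)`), then `∫₀¹ g < ∞` and `ν((0,1)) < ∞`. -/
theorem sonine_pair_local_integrability
    (g : ℝ → ℝ) (hg : Measurable g) (hg0 : ∀ x > (0:ℝ), 0 ≤ g x)
    (ν : Measure ℝ) (hν0 : ν (Set.Iio 0) = 0)
    (hνK : ∀ K : Set ℝ, K ⊆ Set.Ioi 0 → IsCompact K → ν K < ⊤)
    (hSonine : ∀ x ∈ Set.Ioo (0:ℝ) 1,
      (∫⁻ t in Set.Ioo (0:ℝ) x, ENNReal.ofReal (g (x - t)) ∂ν) = 1) :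
    (∫⁻ x in Set.Ioo (0:ℝ) 1, ENNReal.ofReal (g x)) < ⊤ ∧
      ν (Set.Ioo (0:ℝ) 1) < ⊤ :=
  sonine_pair_local_integrability_general g hg ν hνK hSonine
end

section
/- Let f be a special Bernstein function with triplet (0,0,μ) satisfying f(0+)=0, f(λ)→∞, f(λ)/λ→∞ as λ→0, and f(λ)/λ→0 as λ→∞. Then the conjugate f*(λ)=λ/f(λ) has drift b*=0 and killing a*=0, and the tail k(x)=μ*((x,∞)) of its Lévy measure satisfies 𝓛[k;λ] = 1/f(λ) for all λ > 0. -/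
open MeasureTheory Real Set Filter

lemma aux_one_sub_exp_le (y : ℝ) : 1 - Real.exp (-y) ≤ y := by
  have h := Real.add_one_le_exp (-y); linarith

lemma aux_nonneg {l t : ℝ} (hl : 0 ≤ l) (ht : 0 ≤ t) : 0 ≤ 1 - Real.exp (-(l * t)) := by
  have : Real.exp (-(l * t)) ≤ 1 := Real.exp_le_one_iff.mpr (by nlinarith)
  linarith

lemma aux_bound2 {l t : ℝ} (hl : 1 ≤ l) (ht : 0 < t) :
    1 - Real.exp (-(l * t)) ≤ l * min t 1 := by
  rcases le_or_gt t 1 with h | h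
  · rw [min_eq_left h]; exact aux_one_sub_exp_le _
  · rw [min_eq_right h.le]; have := Real.exp_pos (-(l * t)); linarith

lemma aux_bound {l t : ℝ} (hl : 0 < l) (ht : 0 < t) :
    1 - Real.exp (-(l * t)) ≤ max l 1 * min t 1 := by
  rcases le_or_gt t 1 with h | h
  · rw [min_eq_left h]
    calc 1 - Real.exp (-(l * t)) ≤ l * t := aux_one_sub_exp_le _
      _ ≤ max l 1 * t := mul_le_mul_of_nonneg_right (le_max_left l 1) ht.le
  · rw [min_eq_right h.le]
    have h1 := Real.exp_pos (-(l * t))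
    have h2 : (1:ℝ) ≤ max l 1 := le_max_right l 1
    nlinarith

lemma aux_ofReal_bound {l t : ℝ} (hl : 0 < l) (ht : 0 < t) :
    ENNReal.ofReal (1 - Real.exp (-(l * t)))
      ≤ ENNReal.ofReal (max l 1) * ENNReal.ofReal (min t 1) := by
  rw [← ENNReal.ofReal_mul (le_trans zero_le_one (le_max_right l 1))]
  exact ENNReal.ofReal_le_ofReal (aux_bound hl ht)

set_option maxHeartbeats 1000000 in
/-- Let `f` be a special Bernstein function with triplet `(0,0,μ)` satisfying
`f(0+)=0`, `f(λ)→∞` as `λ→∞`, `f(λ)/λ→∞` as `λ→0`, `f(λ)/λ→0` as `λ→∞`.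
If `λ/f(λ)` has the Bernstein representation with triplet `(a*,b*,μ*)`, then
`a* = 0`, `b* = 0` and the tail `k(x) = μ*((x,∞))` satisfies `𝓛[k;λ] = 1/f(λ)`. -/
theorem conjugate_of_A1_bernstein
    (f : ℝ → ℝ) (μ μs : Measure ℝ)
    (hμ0 : μ (Set.Iic 0) = 0) (hμs0 : μs (Set.Iic 0) = 0)
    (hμ : (∫⁻ t, ENNReal.ofReal (min t 1) ∂μ) < ⊤)
    (hμs : (∫⁻ t, ENNReal.ofReal (min t 1) ∂μs) < ⊤)
    (hf : ∀ l > (0:ℝ), f l = ∫ t in Set.Ioi (0:ℝ), (1 - Real.exp (-(l * t))) ∂μ)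
    (hf0 : Tendsto f (nhdsWithin 0 (Set.Ioi 0)) (nhds 0))
    (hfinf : Tendsto f atTop atTop)
    (hdiv0 : Tendsto (fun l => f l / l) (nhdsWithin 0 (Set.Ioi 0)) atTop)
    (hdivinf : Tendsto (fun l => f l / l) atTop (nhds 0))
    (astar bstar : ℝ) (has : 0 ≤ astar) (hbs : 0 ≤ bstar)
    (hconj : ∀ l > (0:ℝ),
      l / f l = astar + bstar * l +
        ∫ t in Set.Ioi (0:ℝ), (1 - Real.exp (-(l * t))) ∂μs) :
    astar = 0 ∧ bstar = 0 ∧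
      ∀ l > (0:ℝ),
        (∫ x in Set.Ioi (0:ℝ), Real.exp (-(l * x)) * (μs (Set.Ioi x)).toReal)
          = 1 / f l := by
  -- ### basic facts
  have hmemμs : ∀ᵐ t ∂μs, t ∈ Set.Ioi (0:ℝ) := by
    rw [ae_iff]
    refine measure_mono_null (fun t ht => ?_) hμs0
    simpa using ht
  have hrs : μs.restrict (Set.Ioi 0) = μs :=
    Measure.restrict_eq_self_of_ae_mem hmemμs
  have hmemμ : ∀ᵐ t ∂μ, t ∈ Set.Ioi (0:ℝ) := by
    rw [ae_iff]
    refine measure_mono_null (fun t ht => ?_) hμ0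
    simpa using ht
  have hr : μ.restrict (Set.Ioi 0) = μ :=
    Measure.restrict_eq_self_of_ae_mem hmemμ
  -- integrability of the dominating function
  have hbint : Integrable (fun t => min t 1) (μs.restrict (Set.Ioi 0)) := by
    rw [hrs]
    refine ⟨(continuous_id.min continuous_const).aestronglyMeasurable, ?_⟩
    rw [hasFiniteIntegral_iff_norm]
    calc (∫⁻ t, ENNReal.ofReal ‖min t 1‖ ∂μs)
        = ∫⁻ t, ENNReal.ofReal (min t 1) ∂μs := by
          refine lintegral_congr_ae (hmemμs.mono fun t ht => ?_)
          simp [Real.norm_eq_abs, abs_of_nonneg (le_min (le_of_lt ht) zero_le_one : (0:ℝ) ≤ min t 1)]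
      _ < ⊤ := hμs
  -- ### positivity of f
  have hμpos : 0 < μ (Set.Ioi 0) := by
    by_contra h
    push_neg at h
    have hz : μ (Set.Ioi 0) = 0 := le_antisymm (le_of_not_gt (by simpa using h)) (zero_le)
    have hrz : μ.restrict (Set.Ioi 0) = 0 := Measure.restrict_eq_zero.mpr hz
    obtain ⟨l, hl1, hl2⟩ := ((hfinf.eventually_ge_atTop 1).and (eventually_gt_atTop 0)).exists
    rw [hf l hl2] at hl1
    rw [show (∫ t in Set.Ioi (0:ℝ), (1 - Real.exp (-(l * t))) ∂μ)
        = ∫ t, (1 - Real.exp (-(l * t))) ∂(μ.restrict (Set.Ioi 0)) from rfl, hrz] at hl1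
    simp at hl1
    linarith
  have hLfin : ∀ (ν : Measure ℝ), (∫⁻ t, ENNReal.ofReal (min t 1) ∂ν) < ⊤ →
      (∀ᵐ t ∂ν, t ∈ Set.Ioi (0:ℝ)) → ∀ l : ℝ, 0 < l →
      (∫⁻ t, ENNReal.ofReal (1 - Real.exp (-(l * t))) ∂ν) < ⊤ := by
    intro ν hν hmem l hl
    calc (∫⁻ t, ENNReal.ofReal (1 - Real.exp (-(l * t))) ∂ν)
        ≤ ∫⁻ t, ENNReal.ofReal (max l 1) * ENNReal.ofReal (min t 1) ∂ν := by
          refine lintegral_mono_ae (hmem.mono fun t ht => ?_)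
          exact aux_ofReal_bound hl ht
      _ = ENNReal.ofReal (max l 1) * ∫⁻ t, ENNReal.ofReal (min t 1) ∂ν :=
          lintegral_const_mul' _ _ ENNReal.ofReal_ne_top
      _ < ⊤ := ENNReal.mul_lt_top ENNReal.ofReal_lt_top hν
  have hfeq : ∀ l : ℝ, 0 < l →
      f l = (∫⁻ t, ENNReal.ofReal (1 - Real.exp (-(l * t))) ∂μ).toReal := by
    intro l hl
    rw [hf l hl]
    rw [show (∫ t in Set.Ioi (0:ℝ), (1 - Real.exp (-(l * t))) ∂μ)
        = ∫ t, (1 - Real.exp (-(l * t))) ∂(μ.restrict (Set.Ioi 0)) from rfl, hr]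
    exact integral_eq_lintegral_of_nonneg_ae
      (hmemμ.mono fun t ht => aux_nonneg hl.le (le_of_lt ht))
      ((continuous_const.sub (Real.continuous_exp.comp
        (continuous_const.mul continuous_id).neg)).aestronglyMeasurable)
  have hfpos : ∀ l : ℝ, 0 < l → 0 < f l := by
    intro l hl
    rw [hfeq l hl]
    have hfin := hLfin μ hμ hmemμ l hl
    have hmeas : Measurable fun t => ENNReal.ofReal (1 - Real.exp (-(l * t))) :=
      (continuous_const.sub (Real.continuous_exp.comp
        (continuous_const.mul continuous_id).neg)).measurable.ennreal_ofReal
    have hpos : 0 < ∫⁻ t, ENNReal.ofReal (1 - Real.exp (-(l * t))) ∂μ := by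
      rw [lintegral_pos_iff_support hmeas]
      refine lt_of_lt_of_le hμpos (measure_mono fun t ht => ?_)
      have htpos : (0:ℝ) < t := ht
      simp only [Function.mem_support, ne_eq, ENNReal.ofReal_eq_zero, not_le]
      have h1 : Real.exp (-(l * t)) < 1 := by
        rw [Real.exp_lt_one_iff]; nlinarith
      linarith
    exact ENNReal.toReal_pos hpos.ne' hfin.ne
  have hFmeas : ∀ l : ℝ, AEStronglyMeasurable (fun t => 1 - Real.exp (-(l * t)))
      (μs.restrict (Set.Ioi 0)) := fun l =>
    (continuous_const.sub (Real.continuous_exp.comp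
      (continuous_const.mul continuous_id).neg)).aestronglyMeasurable
  -- ### astar = 0
  have hI0 : Tendsto (fun l => ∫ t in Set.Ioi (0:ℝ), (1 - Real.exp (-(l * t))) ∂μs)
      (nhdsWithin 0 (Set.Ioi 0)) (nhds 0) := by
    have := tendsto_integral_filter_of_dominated_convergence
      (μ := μs.restrict (Set.Ioi 0)) (l := nhdsWithin 0 (Set.Ioi 0))
      (F := fun l t => 1 - Real.exp (-(l * t))) (f := fun _ => (0:ℝ))
      (fun t => min t 1)
      (Eventually.of_forall hFmeas)
      ?_ hbint ?_
    · simpa using this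
    · filter_upwards [Ioc_mem_nhdsGT_of_mem (Set.left_mem_Ico.mpr zero_lt_one)] with l hl
      rw [ae_restrict_iff' measurableSet_Ioi]
      refine Eventually.of_forall fun t ht => ?_
      have htpos : (0:ℝ) < t := ht
      rw [Real.norm_eq_abs, abs_of_nonneg (aux_nonneg hl.1.le htpos.le)]
      rcases le_or_gt t 1 with h | h
      · rw [min_eq_left h]
        calc 1 - Real.exp (-(l * t)) ≤ l * t := aux_one_sub_exp_le _
          _ ≤ 1 * t := mul_le_mul_of_nonneg_right hl.2 htpos.le
          _ = t := one_mul t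
      · rw [min_eq_right h.le]
        have := Real.exp_pos (-(l * t)); linarith
    · refine Eventually.of_forall fun t => ?_
      have hc : Continuous fun l : ℝ => 1 - Real.exp (-(l * t)) :=
        continuous_const.sub (Real.continuous_exp.comp
          ((continuous_id.mul continuous_const)).neg)
      have := (hc.tendsto 0).mono_left (nhdsWithin_le_nhds (s := Set.Ioi 0))
      simpa using this
  have hL0 : Tendsto (fun l => l / f l) (nhdsWithin 0 (Set.Ioi 0)) (nhds 0) := by
    have := hdiv0.inv_tendsto_atTop
    refine this.congr fun l => ?_
    simp [Pi.inv_apply, inv_div]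
  have hR0 : Tendsto (fun l => astar + bstar * l +
      ∫ t in Set.Ioi (0:ℝ), (1 - Real.exp (-(l * t))) ∂μs)
      (nhdsWithin 0 (Set.Ioi 0)) (nhds astar) := by
    have h1 : Tendsto (fun l : ℝ => astar + bstar * l) (nhdsWithin 0 (Set.Ioi 0))
        (nhds astar) := by
      have hc : Continuous fun l : ℝ => astar + bstar * l :=
        continuous_const.add (continuous_const.mul continuous_id)
      have := (hc.tendsto 0).mono_left (nhdsWithin_le_nhds (s := Set.Ioi 0))
      simpa using this
    simpa using h1.add hI0
  have hastar : astar = 0 := by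
    refine tendsto_nhds_unique ?_ hL0
    refine hR0.congr' ?_
    filter_upwards [self_mem_nhdsWithin] with l hl
    exact (hconj l hl).symm
  -- ### bstar = 0
  have hIinf : Tendsto (fun l => (∫ t in Set.Ioi (0:ℝ), (1 - Real.exp (-(l * t))) ∂μs) / l)
      atTop (nhds 0) := by
    have := tendsto_integral_filter_of_dominated_convergence
      (μ := μs.restrict (Set.Ioi 0)) (l := atTop)
      (F := fun l t => (1 - Real.exp (-(l * t))) / l) (f := fun _ => (0:ℝ))
      (fun t => min t 1)
      (Eventually.of_forall fun l =>
        ((continuous_const.sub (Real.continuous_exp.comp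
          (continuous_const.mul continuous_id).neg)).div_const l).aestronglyMeasurable)
      ?_ hbint ?_
    · have h2 : Tendsto (fun l => ∫ t in Set.Ioi (0:ℝ),
          ((1 - Real.exp (-(l * t))) / l) ∂μs) atTop (nhds 0) := by simpa using this
      refine h2.congr fun l => ?_
      rw [integral_div]
    · filter_upwards [eventually_ge_atTop (1:ℝ)] with l hl
      rw [ae_restrict_iff' measurableSet_Ioi]
      refine Eventually.of_forall fun t ht => ?_
      have htpos : (0:ℝ) < t := ht
      have hlpos : (0:ℝ) < l := lt_of_lt_of_le zero_lt_one hl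
      rw [Real.norm_eq_abs, abs_of_nonneg
        (div_nonneg (aux_nonneg hlpos.le htpos.le) hlpos.le)]
      rw [div_le_iff₀ hlpos]
      calc 1 - Real.exp (-(l * t)) ≤ l * min t 1 := aux_bound2 hl htpos
        _ = min t 1 * l := mul_comm _ _
    · rw [ae_restrict_iff' measurableSet_Ioi]
      refine Eventually.of_forall fun t ht => ?_
      have htpos : (0:ℝ) < t := ht
      · have h1 : Tendsto (fun l : ℝ => -(l * t)) atTop atBot := by
          rw [tendsto_neg_atBot_iff]
          exact Tendsto.atTop_mul_const htpos tendsto_id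
        have h2 : Tendsto (fun l : ℝ => 1 - Real.exp (-(l * t))) atTop (nhds 1) := by
          have := Real.tendsto_exp_atBot.comp h1
          have h3 := (tendsto_const_nhds (x := (1:ℝ)) (f := atTop)).sub this
          simpa using h3
        have h4 : Tendsto (fun l : ℝ => (1 - Real.exp (-(l * t))) * l⁻¹) atTop
            (nhds (1 * 0)) := h2.mul tendsto_inv_atTop_zero
        refine Tendsto.congr (fun l => (div_eq_mul_inv _ _).symm) ?_
        simpa using h4
  have h1f : Tendsto (fun l => 1 / f l) atTop (nhds 0) := by
    have := hfinf.inv_tendsto_atTop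
    refine this.congr fun l => ?_
    simp [Pi.inv_apply, one_div]
  have hbstar : bstar = 0 := by
    have hRinf : Tendsto (fun l => astar / l + bstar +
        (∫ t in Set.Ioi (0:ℝ), (1 - Real.exp (-(l * t))) ∂μs) / l) atTop
        (nhds bstar) := by
      have h1 : Tendsto (fun l : ℝ => astar / l) atTop (nhds 0) :=
        tendsto_const_nhds.div_atTop tendsto_id
      have h2 := (h1.add (tendsto_const_nhds (x := bstar))).add hIinf
      simpa using h2
    refine tendsto_nhds_unique ?_ h1f
    refine hRinf.congr' ?_
    filter_upwards [eventually_gt_atTop (0:ℝ)] with l hl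
    have h := hconj l hl
    have hlne : l ≠ 0 := hl.ne'
    calc astar / l + bstar + (∫ t in Set.Ioi (0:ℝ), (1 - Real.exp (-(l * t))) ∂μs) / l
        = (astar + bstar * l + ∫ t in Set.Ioi (0:ℝ), (1 - Real.exp (-(l * t))) ∂μs) / l := by
          field_simp
      _ = (l / f l) / l := by rw [h]
      _ = (l / l) / f l := div_right_comm _ _ _
      _ = 1 / f l := by rw [div_self hlne]
  refine ⟨hastar, hbstar, fun l hl => ?_⟩
  -- ### the Laplace transform identity
  have htail : ∀ x : ℝ, 0 < x → μs (Set.Ioi x) ≠ ⊤ := by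
    intro x hx htop
    have h1 : ENNReal.ofReal (min x 1) * μs (Set.Ioi x)
        ≤ ∫⁻ t, ENNReal.ofReal (min t 1) ∂μs := by
      calc ENNReal.ofReal (min x 1) * μs (Set.Ioi x)
          = ∫⁻ _ in Set.Ioi x, ENNReal.ofReal (min x 1) ∂μs := (setLIntegral_const _ _).symm
        _ ≤ ∫⁻ t in Set.Ioi x, ENNReal.ofReal (min t 1) ∂μs := by
            refine lintegral_mono_ae ?_
            rw [ae_restrict_iff' measurableSet_Ioi]
            exact Eventually.of_forall fun t ht =>
              ENNReal.ofReal_le_ofReal (min_le_min (le_of_lt ht) le_rfl)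
        _ ≤ ∫⁻ t, ENNReal.ofReal (min t 1) ∂μs := setLIntegral_le_lintegral _ _
    rw [htop, ENNReal.mul_top
      (ENNReal.ofReal_pos.mpr (lt_min hx zero_lt_one)).ne'] at h1
    exact hμs.ne (top_le_iff.mp h1)
  have hLfin' := hLfin μs hμs hmemμs l hl
  set L := ∫⁻ t, ENNReal.ofReal (1 - Real.exp (-(l * t))) ∂μs with hLdef
  have hIeq : (∫ t in Set.Ioi (0:ℝ), (1 - Real.exp (-(l * t))) ∂μs) = L.toReal := by
    rw [show (∫ t in Set.Ioi (0:ℝ), (1 - Real.exp (-(l * t))) ∂μs)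
        = ∫ t, (1 - Real.exp (-(l * t))) ∂(μs.restrict (Set.Ioi 0)) from rfl, hrs]
    exact integral_eq_lintegral_of_nonneg_ae
      (hmemμs.mono fun t ht => aux_nonneg hl.le (le_of_lt ht))
      ((continuous_const.sub (Real.continuous_exp.comp
        (continuous_const.mul continuous_id).neg)).aestronglyMeasurable)
  have hIval : L.toReal = l / f l := by
    have h := hconj l hl
    rw [hastar, hbstar, hIeq] at h
    simpa using h.symm
  haveI : SigmaFinite μs := by
    refine ⟨⟨⟨fun n => Set.Iic 0 ∪ Set.Ioi (1/(n+1) : ℝ), fun _ => trivial,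
      fun n => ?_, ?_⟩⟩⟩
    · refine lt_of_le_of_lt (measure_union_le _ _) ?_
      rw [hμs0, zero_add]
      exact lt_top_iff_ne_top.mpr (htail _ (by positivity))
    · apply Set.eq_univ_of_forall
      intro x
      rcases le_or_gt x 0 with hx | hx
      · exact Set.mem_iUnion.mpr ⟨0, Or.inl hx⟩
      · obtain ⟨n, hn⟩ := exists_nat_one_div_lt hx
        exact Set.mem_iUnion.mpr ⟨n, Or.inr hn⟩
  -- Fubini computation
  have hinner : ∀ t : ℝ,
      (∫⁻ x in Set.Ioi (0:ℝ),
        (Set.Ioi x).indicator (fun _ => ENNReal.ofReal (Real.exp (-(l * x)))) t)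
      = ENNReal.ofReal ((1 - Real.exp (-(l * t))) / l) := by
    intro t
    have e1 : ∀ x : ℝ, (Set.Ioi x).indicator
        (fun _ => ENNReal.ofReal (Real.exp (-(l * x)))) t
        = (Set.Iio t).indicator (fun x => ENNReal.ofReal (Real.exp (-(l * x)))) x := by
      intro x
      by_cases h : x < t <;>
        simp [Set.indicator_apply, Set.mem_Ioi, Set.mem_Iio, h]
    rw [lintegral_congr e1, lintegral_indicator measurableSet_Iio,
      Measure.restrict_restrict measurableSet_Iio,
      show Set.Iio t ∩ Set.Ioi (0:ℝ) = Set.Ioo 0 t by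
        rw [Set.inter_comm, Set.Ioi_inter_Iio]]
    rcases le_or_gt t 0 with ht | ht
    · rw [Set.Ioo_eq_empty (not_lt.mpr ht), Measure.restrict_empty,
        lintegral_zero_measure]
      symm
      rw [ENNReal.ofReal_eq_zero]
      have h1 : (1:ℝ) ≤ Real.exp (-(l * t)) := Real.one_le_exp (by nlinarith)
      exact div_nonpos_of_nonpos_of_nonneg (by linarith) hl.le
    · have hint : IntegrableOn (fun x => Real.exp (-(l * x))) (Set.Ioo 0 t) volume :=
        ((Real.continuous_exp.comp
          (continuous_const.mul continuous_id).neg).integrableOn_Icc).mono_set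
          Set.Ioo_subset_Icc_self
      rw [← ofReal_integral_eq_lintegral_ofReal hint
        (Eventually.of_forall fun x => (Real.exp_pos _).le)]
      congr 1
      rw [← integral_Ioc_eq_integral_Ioo, ← intervalIntegral.integral_of_le ht.le]
      have hderiv : ∀ x ∈ Set.uIcc (0:ℝ) t,
          HasDerivAt (fun y => -Real.exp (-(l * y)) / l) (Real.exp (-(l * x))) x := by
        intro x _
        have h1 : HasDerivAt (fun y : ℝ => -(l * y)) (-l) x := by
          simpa using ((hasDerivAt_id x).const_mul l).fun_neg
        have h2 := (Real.hasDerivAt_exp (-(l * x))).comp x h1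
        have h3 : HasDerivAt (fun y => -Real.exp (-(l * y)) / l)
            (-(Real.exp (-(l * x)) * -l) / l) x := h2.neg.div_const l
        convert h3 using 1
        field_simp
      rw [intervalIntegral.integral_eq_sub_of_hasDerivAt hderiv
        ((Real.continuous_exp.comp
          (continuous_const.mul continuous_id).neg).intervalIntegrable 0 t)]
      rw [mul_zero, neg_zero, Real.exp_zero]
      ring
  have hkey : (∫⁻ x in Set.Ioi (0:ℝ),
      ENNReal.ofReal (Real.exp (-(l * x))) * μs (Set.Ioi x)) = L / ENNReal.ofReal l := by
    have hmeasu : AEMeasurable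
        (Function.uncurry fun x t => (Set.Ioi x).indicator
          (fun _ => ENNReal.ofReal (Real.exp (-(l * x)))) t)
        ((volume.restrict (Set.Ioi (0:ℝ))).prod μs) := by
      have heq : (Function.uncurry fun x t => (Set.Ioi x).indicator
          (fun _ => ENNReal.ofReal (Real.exp (-(l * x)))) t)
          = fun p : ℝ × ℝ => {q : ℝ × ℝ | q.1 < q.2}.indicator
              (fun q => ENNReal.ofReal (Real.exp (-(l * q.1)))) p := by
        funext p
        by_cases h : p.1 < p.2 <;>
          simp [Function.uncurry, Set.indicator_apply, Set.mem_Ioi, h]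
      rw [heq]
      exact (Measurable.indicator
        ((Real.measurable_exp.comp
          ((measurable_const.mul measurable_fst).neg)).ennreal_ofReal)
        (measurableSet_lt measurable_fst measurable_snd)).aemeasurable
    calc (∫⁻ x in Set.Ioi (0:ℝ), ENNReal.ofReal (Real.exp (-(l * x))) * μs (Set.Ioi x))
        = ∫⁻ x in Set.Ioi (0:ℝ), ∫⁻ t, (Set.Ioi x).indicator
            (fun _ => ENNReal.ofReal (Real.exp (-(l * x)))) t ∂μs := by
          refine lintegral_congr fun x => ?_
          rw [lintegral_indicator measurableSet_Ioi, setLIntegral_const]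
      _ = ∫⁻ t, (∫⁻ x in Set.Ioi (0:ℝ), (Set.Ioi x).indicator
            (fun _ => ENNReal.ofReal (Real.exp (-(l * x)))) t) ∂μs :=
          lintegral_lintegral_swap hmeasu
      _ = ∫⁻ t, ENNReal.ofReal ((1 - Real.exp (-(l * t))) / l) ∂μs :=
          lintegral_congr fun t => hinner t
      _ = ∫⁻ t, ENNReal.ofReal (1 - Real.exp (-(l * t))) * (ENNReal.ofReal l)⁻¹ ∂μs := by
          refine lintegral_congr fun t => ?_
          rw [ENNReal.ofReal_div_of_pos hl, div_eq_mul_inv]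
      _ = L * (ENNReal.ofReal l)⁻¹ := lintegral_mul_const' _ _
          (by simp [ENNReal.inv_ne_top, (ENNReal.ofReal_pos.mpr hl).ne'])
      _ = L / ENNReal.ofReal l := by rw [div_eq_mul_inv]
  have hA : (∫ x in Set.Ioi (0:ℝ), Real.exp (-(l * x)) * (μs (Set.Ioi x)).toReal)
      = (∫⁻ x in Set.Ioi (0:ℝ),
          ENNReal.ofReal (Real.exp (-(l * x)) * (μs (Set.Ioi x)).toReal)).toReal := by
    refine integral_eq_lintegral_of_nonneg_ae
      (Eventually.of_forall fun x => mul_nonneg (Real.exp_pos _).le ENNReal.toReal_nonneg)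
      (Measurable.aestronglyMeasurable ?_)
    exact (Real.measurable_exp.comp ((measurable_const.mul measurable_id).neg)).mul
      ((Antitone.measurable fun a b hab => measure_mono (Set.Ioi_subset_Ioi hab)).ennreal_toReal)
  have hcong : (∫⁻ x in Set.Ioi (0:ℝ),
      ENNReal.ofReal (Real.exp (-(l * x)) * (μs (Set.Ioi x)).toReal))
      = ∫⁻ x in Set.Ioi (0:ℝ), ENNReal.ofReal (Real.exp (-(l * x))) * μs (Set.Ioi x) := by
    refine setLIntegral_congr_fun measurableSet_Ioi (fun x hx => ?_)
    rw [ENNReal.ofReal_mul (Real.exp_pos _).le, ENNReal.ofReal_toReal (htail x hx)]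
  rw [hA, hcong, hkey, ENNReal.toReal_div, ENNReal.toReal_ofReal hl.le, hIval,
    div_right_comm, div_self hl.ne']
end

section
/- Let (μ̄, k) be a positive Sonine pair with μ̄ decreasing on (0,∞). Fix T > 0. Then sup_{x ∈ (0,T]} μ̄(x) ∫₀^x k(s) ds = 1 if and only if limsup_{x→0} μ̄(x) ∫₀^x k(s) ds = 1. -/
open MeasureTheory Real Set Filter

private lemma ae_ne_vol (c : ℝ) : ∀ᵐ t : ℝ ∂(volume : Measure ℝ), t ≠ c := by
  have h : (volume : Measure ℝ) {c} = 0 := Real.volume_singleton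
  rw [ae_iff]
  simpa [not_not, Set.setOf_eq_eq_singleton] using h

private lemma kII (k : ℝ → ℝ) (hk_loc : ∀ S > (0:ℝ), IntegrableOn k (Set.Ioc 0 S))
    {a b : ℝ} (ha : 0 ≤ a) (hab : a ≤ b) (hb : 0 < b) :
    IntervalIntegrable k volume a b := by
  have h := (intervalIntegrable_iff_integrableOn_Ioc_of_le hb.le).mpr (hk_loc b hb)
  exact h.mono_set (by
    rw [uIcc_of_le hab, uIcc_of_le hb.le]
    exact Set.Icc_subset_Icc ha le_rfl)

private lemma kInt_nonneg (k : ℝ → ℝ) (hk0 : ∀ x > (0:ℝ), 0 ≤ k x)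
    {a b : ℝ} (ha : 0 ≤ a) (hab : a ≤ b) : 0 ≤ ∫ s in a..b, k s := by
  rw [intervalIntegral.integral_of_le hab]
  exact setIntegral_nonneg measurableSet_Ioc fun t ht => hk0 t (lt_of_le_of_lt ha ht.1)

private lemma sonII (mu k : ℝ → ℝ)
    (hSonine : ∀ x > (0:ℝ), (∫ t in (0:ℝ)..x, mu (x - t) * k t) = 1)
    {x : ℝ} (hx : 0 < x) :
    IntervalIntegrable (fun t => mu (x - t) * k t) volume 0 x := by
  by_contra h
  exact one_ne_zero ((hSonine x hx).symm.trans (intervalIntegral.integral_undef h))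

private lemma F_le_one (mu k : ℝ → ℝ)
    (hk0 : ∀ x > (0:ℝ), 0 ≤ k x)
    (hmu_anti : AntitoneOn mu (Set.Ioi 0))
    (hk_loc : ∀ S > (0:ℝ), IntegrableOn k (Set.Ioc 0 S))
    (hSonine : ∀ x > (0:ℝ), (∫ t in (0:ℝ)..x, mu (x - t) * k t) = 1)
    {x : ℝ} (hx : 0 < x) :
    mu x * ∫ s in (0:ℝ)..x, k s ≤ 1 := by
  rw [← hSonine x hx, ← intervalIntegral.integral_const_mul]
  refine intervalIntegral.integral_mono_ae_restrict hx.le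
    ((kII k hk_loc le_rfl hx.le hx).const_mul (mu x)) (sonII mu k hSonine hx) ?_
  filter_upwards [ae_restrict_mem measurableSet_Icc, ae_restrict_of_ae (ae_ne_vol 0),
    ae_restrict_of_ae (ae_ne_vol x)] with t ht h0 hxne
  have ht0 : 0 < t := lt_of_le_of_ne ht.1 (Ne.symm h0)
  have htx : t < x := lt_of_le_of_ne ht.2 hxne
  have hxt : (0:ℝ) < x - t := by linarith
  have hmono : mu x ≤ mu (x - t) :=
    hmu_anti hxt hx (by linarith)
  exact mul_le_mul_of_nonneg_right hmono (hk0 t ht0)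

private lemma one_sub_F (mu k : ℝ → ℝ)
    (hk_loc : ∀ S > (0:ℝ), IntegrableOn k (Set.Ioc 0 S))
    (hSonine : ∀ x > (0:ℝ), (∫ t in (0:ℝ)..x, mu (x - t) * k t) = 1)
    {x : ℝ} (hx : 0 < x) :
    (∫ t in (0:ℝ)..x, (mu (x - t) * k t - mu x * k t)) =
      1 - mu x * ∫ s in (0:ℝ)..x, k s := by
  rw [intervalIntegral.integral_sub (sonII mu k hSonine hx)
    ((kII k hk_loc le_rfl hx.le hx).const_mul (mu x)),
    hSonine x hx, intervalIntegral.integral_const_mul]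

/-- The descent step: if `ε < δ < x` and `mu δ < mu ε`, then
`F x ≤ F (x-ε) + (mu δ/(mu ε - mu δ)) * (1 - F x)`. -/
private lemma step (mu k : ℝ → ℝ)
    (hmu0 : ∀ x > (0:ℝ), 0 ≤ mu x) (hk0 : ∀ x > (0:ℝ), 0 ≤ k x)
    (hmu_anti : AntitoneOn mu (Set.Ioi 0))
    (hk_loc : ∀ S > (0:ℝ), IntegrableOn k (Set.Ioc 0 S))
    (hSonine : ∀ x > (0:ℝ), (∫ t in (0:ℝ)..x, mu (x - t) * k t) = 1)
    {δ ε x : ℝ} (hε0 : 0 < ε) (hεδ : ε < δ) (hδx : δ < x) (hγ : mu δ < mu ε) :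
    mu x * ∫ s in (0:ℝ)..x, k s ≤
      (mu (x - ε) * ∫ s in (0:ℝ)..(x - ε), k s) +
        (mu δ / (mu ε - mu δ)) * (1 - mu x * ∫ s in (0:ℝ)..x, k s) := by
  have hδ0 : (0:ℝ) < δ := hε0.trans hεδ
  have hx0 : (0:ℝ) < x := hδ0.trans hδx
  have hxε0 : (0:ℝ) < x - ε := by linarith
  have hγ0 : (0:ℝ) < mu ε - mu δ := by linarith
  set γ := mu ε - mu δ with hγdef
  -- integrabilities
  have hIg : IntervalIntegrable (fun t => mu (x - t) * k t - mu x * k t) volume 0 x :=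
    (sonII mu k hSonine hx0).sub ((kII k hk_loc le_rfl hx0.le hx0).const_mul (mu x))
  have hIg1 : IntervalIntegrable (fun t => mu (x - t) * k t - mu x * k t) volume 0 (x - ε) :=
    hIg.mono_set (by
      rw [uIcc_of_le hxε0.le, uIcc_of_le hx0.le]
      exact Set.Icc_subset_Icc le_rfl (by linarith))
  have hIg2 : IntervalIntegrable (fun t => mu (x - t) * k t - mu x * k t) volume (x - ε) x :=
    hIg.mono_set (by
      rw [uIcc_of_le (by linarith : x - ε ≤ x), uIcc_of_le hx0.le]
      exact Set.Icc_subset_Icc hxε0.le le_rfl)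
  have hIk2 : IntervalIntegrable k volume (x - ε) x :=
    kII k hk_loc hxε0.le (by linarith) hx0
  -- tail bound : γ * ∫_{x-ε}^x k ≤ 1 - F x
  have htail : γ * (∫ s in (x - ε)..x, k s) ≤ 1 - mu x * ∫ s in (0:ℝ)..x, k s := by
    rw [← one_sub_F mu k hk_loc hSonine hx0,
      ← intervalIntegral.integral_add_adjacent_intervals hIg1 hIg2]
    have h1 : (0:ℝ) ≤ ∫ t in (0:ℝ)..(x - ε), (mu (x - t) * k t - mu x * k t) := by
      rw [intervalIntegral.integral_of_le hxε0.le]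
      refine setIntegral_nonneg measurableSet_Ioc fun t ht => ?_
      have ht0 : 0 < t := ht.1
      have hxt : (0:ℝ) < x - t := by
        have := ht.2; linarith
      have : mu x ≤ mu (x - t) := hmu_anti hxt hx0 (by linarith)
      have hk := hk0 t ht0
      nlinarith
    have h2 : γ * (∫ s in (x - ε)..x, k s)
        ≤ ∫ t in (x - ε)..x, (mu (x - t) * k t - mu x * k t) := by
      rw [← intervalIntegral.integral_const_mul]
      refine intervalIntegral.integral_mono_ae_restrict (by linarith)
        (hIk2.const_mul γ) hIg2 ?_
      filter_upwards [ae_restrict_mem measurableSet_Icc,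
        ae_restrict_of_ae (ae_ne_vol (x - ε)), ae_restrict_of_ae (ae_ne_vol x)]
        with t ht h1' h2'
      have ht1 : x - ε < t := lt_of_le_of_ne ht.1 (Ne.symm h1')
      have ht2 : t < x := lt_of_le_of_ne ht.2 h2'
      have hxt0 : (0:ℝ) < x - t := by linarith
      have hμ1 : mu ε ≤ mu (x - t) := hmu_anti hxt0 hε0 (by linarith)
      have hμ2 : mu x ≤ mu δ := hmu_anti hδ0 hx0 hδx.le
      have hk := hk0 t (by linarith : (0:ℝ) < t)
      have : γ ≤ mu (x - t) - mu x := by simp only [hγdef]; linarith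
      nlinarith
    linarith
  -- split F x
  have hsplit : mu x * ∫ s in (0:ℝ)..x, k s =
      mu x * (∫ s in (0:ℝ)..(x - ε), k s) + mu x * ∫ s in (x - ε)..x, k s := by
    rw [← mul_add, intervalIntegral.integral_add_adjacent_intervals
      (kII k hk_loc le_rfl hxε0.le hxε0) hIk2]
  have hμx : mu x ≤ mu (x - ε) := hmu_anti hxε0 hx0 (by linarith)
  have hμxδ : mu x ≤ mu δ := hmu_anti hδ0 hx0 hδx.le
  have hKnn : (0:ℝ) ≤ ∫ s in (0:ℝ)..(x - ε), k s := kInt_nonneg k hk0 le_rfl hxε0.le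
  have hK2nn : (0:ℝ) ≤ ∫ s in (x - ε)..x, k s := kInt_nonneg k hk0 hxε0.le (by linarith)
  have h3 : mu x * (∫ s in (0:ℝ)..(x - ε), k s) ≤
      mu (x - ε) * ∫ s in (0:ℝ)..(x - ε), k s :=
    mul_le_mul_of_nonneg_right hμx hKnn
  have hμδnn : 0 ≤ mu δ := hmu0 δ hδ0
  have h4 : mu x * (∫ s in (x - ε)..x, k s) ≤
      (mu δ / γ) * (1 - mu x * ∫ s in (0:ℝ)..x, k s) := by
    have h4a : mu x * (∫ s in (x - ε)..x, k s) ≤ mu δ * ∫ s in (x - ε)..x, k s :=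
      mul_le_mul_of_nonneg_right hμxδ hK2nn
    have h4b : mu δ * (∫ s in (x - ε)..x, k s)
        = (mu δ / γ) * (γ * ∫ s in (x - ε)..x, k s) := by
      field_simp
    have h4c : (mu δ / γ) * (γ * ∫ s in (x - ε)..x, k s)
        ≤ (mu δ / γ) * (1 - mu x * ∫ s in (0:ℝ)..x, k s) :=
      mul_le_mul_of_nonneg_left htail (by positivity)
    linarith
  linarith

/-- Iterated descent. -/
private lemma descend (mu k : ℝ → ℝ)
    (hmu0 : ∀ x > (0:ℝ), 0 ≤ mu x) (hk0 : ∀ x > (0:ℝ), 0 ≤ k x)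
    (hmu_anti : AntitoneOn mu (Set.Ioi 0))
    (hk_loc : ∀ S > (0:ℝ), IntegrableOn k (Set.Ioc 0 S))
    (hSonine : ∀ x > (0:ℝ), (∫ t in (0:ℝ)..x, mu (x - t) * k t) = 1)
    {δ ε : ℝ} (hε0 : 0 < ε) (hεδ : ε < δ) (hγ : mu δ < mu ε) :
    ∀ n : ℕ, ∀ x θ : ℝ, 0 < x → x ≤ δ + n * ε → 0 ≤ θ →
      1 - θ ≤ mu x * (∫ s in (0:ℝ)..x, k s) →
      ∃ y, 0 < y ∧ y ≤ δ ∧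
        1 - θ * (1 + mu δ / (mu ε - mu δ)) ^ n ≤ mu y * ∫ s in (0:ℝ)..y, k s := by
  have hδ0 : (0:ℝ) < δ := hε0.trans hεδ
  have hγ0 : (0:ℝ) < mu ε - mu δ := by linarith
  have hA0 : 0 ≤ mu δ / (mu ε - mu δ) := div_nonneg (hmu0 δ hδ0) hγ0.le
  intro n
  induction n with
  | zero =>
    intro x θ hx0 hxle hθ hF
    exact ⟨x, hx0, by simpa using hxle, by simpa using hF⟩
  | succ n ih =>
    intro x θ hx0 hxle hθ hF
    rcases le_or_gt x δ with hxδ | hxδ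
    · refine ⟨x, hx0, hxδ, le_trans ?_ hF⟩
      have : (1:ℝ) ≤ (1 + mu δ / (mu ε - mu δ)) ^ (n + 1) :=
        one_le_pow₀ (by linarith)
      nlinarith
    · have hstep := step mu k hmu0 hk0 hmu_anti hk_loc hSonine hε0 hεδ hxδ hγ
      set A := mu δ / (mu ε - mu δ)
      have hF1 : 1 - mu x * ∫ s in (0:ℝ)..x, k s ≤ θ := by linarith
      have hFε : 1 - θ * (1 + A) ≤ mu (x - ε) * ∫ s in (0:ℝ)..(x - ε), k s := by
        have : A * (1 - mu x * ∫ s in (0:ℝ)..x, k s) ≤ A * θ :=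
          mul_le_mul_of_nonneg_left hF1 hA0
        nlinarith
      have hle : x - ε ≤ δ + n * ε := by
        push_cast at hxle ⊢
        linarith
      obtain ⟨y, hy0, hyδ, hy⟩ := ih (x - ε) (θ * (1 + A)) (by linarith) hle
        (by nlinarith) hFε
      refine ⟨y, hy0, hyδ, le_trans (le_of_eq ?_) hy⟩
      rw [pow_succ]
      ring

/-- If `mu` is constant on `(0,δ]`, then `F ≡ 1` there. -/
private lemma const_case (mu k : ℝ → ℝ)
    (hSonine : ∀ x > (0:ℝ), (∫ t in (0:ℝ)..x, mu (x - t) * k t) = 1)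
    {δ : ℝ} (hδ : 0 < δ) (hconst : ∀ s, 0 < s → s < δ → mu s = mu δ)
    {x : ℝ} (hx0 : 0 < x) (hxδ : x ≤ δ) :
    mu x * ∫ s in (0:ℝ)..x, k s = 1 := by
  have hmux : mu x = mu δ := by
    rcases lt_or_eq_of_le hxδ with h | h
    · exact hconst x hx0 h
    · rw [h]
  have hcongr : (∫ t in (0:ℝ)..x, mu (x - t) * k t) = ∫ t in (0:ℝ)..x, mu δ * k t := by
    refine intervalIntegral.integral_congr_ae ?_
    filter_upwards [ae_ne_vol x] with t htne hmem
    rw [Set.uIoc_of_le hx0.le] at hmem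
    have htx : t < x := lt_of_le_of_ne hmem.2 htne
    have h1 : 0 < x - t := by linarith
    have h2 : x - t < δ := by
      have := hmem.1; linarith
    rw [hconst (x - t) h1 h2]
  have := hSonine x hx0
  rw [hcongr, intervalIntegral.integral_const_mul] at this
  rw [hmux, this]

/-- For a positive Sonine pair `(μ̄,k)` with `μ̄` decreasing and `T > 0`:
`sup_{x ∈ (0,T]} μ̄(x) ∫₀^x k = 1` iff `limsup_{x→0+} μ̄(x) ∫₀^x k = 1`. -/
theorem sonine_sup_eq_one_iff_limsup_eq_one
    (mu k : ℝ → ℝ) (hmu_meas : Measurable mu) (hk_meas : Measurable k)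
    (hmu0 : ∀ x > (0:ℝ), 0 ≤ mu x) (hk0 : ∀ x > (0:ℝ), 0 ≤ k x)
    (hmu_anti : AntitoneOn mu (Set.Ioi 0))
    (hmu_loc : ∀ S > (0:ℝ), IntegrableOn mu (Set.Ioc 0 S))
    (hk_loc : ∀ S > (0:ℝ), IntegrableOn k (Set.Ioc 0 S))
    (hSonine : ∀ x > (0:ℝ), (∫ t in (0:ℝ)..x, mu (x - t) * k t) = 1)
    (T : ℝ) (hT : 0 < T) :
    (⨆ x : Set.Ioc (0:ℝ) T, mu ↑x * ∫ s in (0:ℝ)..(x:ℝ), k s) = 1 ↔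
      Filter.limsup (fun x => mu x * ∫ s in (0:ℝ)..x, k s)
        (nhdsWithin 0 (Set.Ioi 0)) = 1 := by
  set F : ℝ → ℝ := fun x => mu x * ∫ s in (0:ℝ)..x, k s with hFdef
  haveI : Nonempty (Set.Ioc (0:ℝ) T) := ⟨⟨T, hT, le_rfl⟩⟩
  have hFle : ∀ x > (0:ℝ), F x ≤ 1 := fun x hx =>
    F_le_one mu k hk0 hmu_anti hk_loc hSonine hx
  have hFnn : ∀ x > (0:ℝ), 0 ≤ F x := fun x hx =>
    mul_nonneg (hmu0 x hx) (kInt_nonneg k hk0 le_rfl hx.le)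
  have hbdd : BddAbove (Set.range fun x : Set.Ioc (0:ℝ) T => F ↑x) := by
    refine ⟨1, ?_⟩
    rintro v ⟨x, rfl⟩
    exact hFle x x.2.1
  have hsup_le : (⨆ x : Set.Ioc (0:ℝ) T, F ↑x) ≤ 1 :=
    ciSup_le fun x => hFle x x.2.1
  -- eventual bounds near 0⁺
  have hev_mem : ∀ᶠ x in nhdsWithin (0:ℝ) (Set.Ioi 0), x ∈ Set.Ioi (0:ℝ) :=
    eventually_mem_nhdsWithin
  have hev_le : ∀ᶠ x in nhdsWithin (0:ℝ) (Set.Ioi 0), F x ≤ 1 :=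
    hev_mem.mono fun x hx => hFle x hx
  have hev_nn : ∀ᶠ x in nhdsWithin (0:ℝ) (Set.Ioi 0), (0:ℝ) ≤ F x :=
    hev_mem.mono fun x hx => hFnn x hx
  have hb_le : IsBoundedUnder (· ≤ ·) (nhdsWithin (0:ℝ) (Set.Ioi 0)) F :=
    ⟨1, hev_le⟩
  have hb_ge : IsBoundedUnder (· ≥ ·) (nhdsWithin (0:ℝ) (Set.Ioi 0)) F :=
    ⟨0, hev_nn⟩
  have hcob : IsCoboundedUnder (· ≤ ·) (nhdsWithin (0:ℝ) (Set.Ioi 0)) F :=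
    hb_ge.isCoboundedUnder_flip
  have hlimsup_le : Filter.limsup F (nhdsWithin (0:ℝ) (Set.Ioi 0)) ≤ 1 :=
    Filter.limsup_le_of_le hcob hev_le
  -- main claim : sup = 1 → values near 1 arbitrarily close to 0
  have h_main : (⨆ x : Set.Ioc (0:ℝ) T, F ↑x) = 1 →
      ∀ θ > (0:ℝ), ∀ η > (0:ℝ), ∃ x, 0 < x ∧ x < η ∧ 1 - θ ≤ F x := by
    intro hsup θ hθ η hη
    set δ := min η T / 2 with hδdef
    have hδ0 : 0 < δ := by positivity
    have hδη : δ < η := by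
      have : min η T ≤ η := min_le_left _ _
      simp only [hδdef]; linarith
    have hδT : δ < T := by
      have : min η T ≤ T := min_le_right _ _
      simp only [hδdef]; linarith
    by_cases hcase : ∃ ε, 0 < ε ∧ ε < δ ∧ mu δ < mu ε
    · obtain ⟨ε, hε0, hεδ, hγ⟩ := hcase
      have hγ0 : (0:ℝ) < mu ε - mu δ := by linarith
      set A := mu δ / (mu ε - mu δ) with hAdef
      have hA0 : 0 ≤ A := div_nonneg (hmu0 δ hδ0) hγ0.le
      set N : ℕ := ⌈T / ε⌉₊ with hNdef
      have hTN : T ≤ δ + N * ε := by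
        have h1 : T / ε ≤ (N : ℝ) := Nat.le_ceil _
        have h2 : T ≤ (N : ℝ) * ε := by
          rw [div_le_iff₀ hε0] at h1; linarith
        linarith
      have hB0 : (0:ℝ) < (1 + A) ^ N := by positivity
      set θ' := θ / (1 + A) ^ N with hθ'def
      have hθ'0 : 0 < θ' := by positivity
      have hlt : 1 - θ' < ⨆ x : Set.Ioc (0:ℝ) T, F ↑x := by
        rw [hsup]; linarith
      obtain ⟨⟨x, hx⟩, hxF⟩ := exists_lt_of_lt_ciSup hlt
      obtain ⟨y, hy0, hyδ, hyF⟩ := descend mu k hmu0 hk0 hmu_anti hk_loc hSonine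
        hε0 hεδ hγ N x θ' hx.1 (le_trans hx.2 hTN) hθ'0.le hxF.le
      refine ⟨y, hy0, lt_of_le_of_lt hyδ hδη, le_trans ?_ hyF⟩
      have : θ' * (1 + A) ^ N = θ := by
        rw [hθ'def]; field_simp
      rw [this]
    · push_neg at hcase
      have hconst : ∀ s, 0 < s → s < δ → mu s = mu δ := fun s hs0 hsδ =>
        le_antisymm (hcase s hs0 hsδ) (hmu_anti hs0 hδ0 hsδ.le)
      refine ⟨δ, hδ0, hδη, ?_⟩
      have hc := const_case mu k hSonine hδ0 hconst hδ0 le_rfl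
      simp only [hFdef]
      rw [hc]
      linarith
  show (⨆ x : Set.Ioc (0:ℝ) T, F ↑x) = 1 ↔
      Filter.limsup F (nhdsWithin 0 (Set.Ioi 0)) = 1
  constructor
  · -- sup = 1 → limsup = 1
    intro hsup
    refine le_antisymm hlimsup_le ?_
    refine le_of_forall_lt fun c hc => ?_
    have hθ : (0:ℝ) < (1 - c) / 2 := by linarith
    have hfreq : ∃ᶠ x in nhdsWithin (0:ℝ) (Set.Ioi 0), 1 - (1 - c) / 2 ≤ F x := by
      rw [Filter.frequently_iff]
      intro U hU
      obtain ⟨u, hu, hsub⟩ := mem_nhdsGT_iff_exists_Ioo_subset.mp hU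
      obtain ⟨x, hx0, hxu, hxF⟩ := h_main hsup ((1 - c) / 2) hθ u hu
      exact ⟨x, hsub ⟨hx0, hxu⟩, hxF⟩
    have := Filter.le_limsup_of_frequently_le hfreq hb_le
    linarith
  · -- limsup = 1 → sup = 1
    intro hlim
    refine le_antisymm hsup_le ?_
    refine le_of_forall_lt fun c hc => ?_
    have hclim : c < Filter.limsup F (nhdsWithin (0:ℝ) (Set.Ioi 0)) := by
      rw [hlim]; exact hc
    have hfreq := Filter.frequently_lt_of_lt_limsup hcob hclim
    have hevT : ∀ᶠ x in nhdsWithin (0:ℝ) (Set.Ioi 0), x < T := by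
      refine Filter.Eventually.filter_mono nhdsWithin_le_nhds ?_
      exact eventually_lt_nhds hT
    obtain ⟨x, hxF, hx0, hxT⟩ := ((hfreq.and_eventually (hev_mem.and hevT)).exists)
    calc c < F x := hxF
      _ ≤ ⨆ z : Set.Ioc (0:ℝ) T, F ↑z := le_ciSup hbdd ⟨x, hx0, hxT.le⟩
end

section
/- Let (μ̄,k) be a positive Sonine pair. For continuous bounded φ on [0,T] and the operator Kφ(x) = ∫₀^x μ̄(r) k(x-r) φ(r) dr (with Kφ(0) := φ(0)), the operator K maps C[0,T] into C[0,T]; in particular |Kφ(x) - φ(0)| ≤ sup_{r ∈ [0,x]} |φ(r) - φ(0)|, so Kφ is continuous at 0. -/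
open MeasureTheory Real Set Filter Topology

/-- The operator `Kφ(x) = ∫₀^x μ̄(r) k(x-r) φ(r) dr` for `x > 0`, with `Kφ(0) := φ(0)`. -/
noncomputable def Kop0 (mu k : ℝ → ℝ) (φ : ℝ → ℝ) : ℝ → ℝ :=
  fun x => if x = 0 then φ 0 else ∫ r in (0:ℝ)..x, mu r * k (x - r) * φ r

section Aux
variable {mu k φ : ℝ → ℝ} {T : ℝ}

/-- integrability of the Sonine kernel product from the Sonine identity. -/
lemma muk_int (hSonine : ∀ x > (0:ℝ), (∫ r in (0:ℝ)..x, mu r * k (x - r)) = 1)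
    {x : ℝ} (hx : 0 < x) :
    IntegrableOn (fun r => mu r * k (x - r)) (Ioc 0 x) := by
  by_contra h
  have h1 := hSonine x hx
  rw [intervalIntegral.integral_of_le hx.le, integral_undef h] at h1
  norm_num at h1

lemma aesm_g (hmu_meas : Measurable mu) (hk_cont : ContinuousOn k (Set.Ioi 0))
    (hφ : ContinuousOn φ (Set.Icc 0 T))
    {x : ℝ} (hxT : x ≤ T) :
    AEStronglyMeasurable (fun r => mu r * k (x - r) * φ r) (volume.restrict (Ioc 0 x)) := by
  rw [Measure.restrict_congr_set Ioo_ae_eq_Ioc.symm]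
  have h1 : ContinuousOn (fun r => k (x - r)) (Ioo 0 x) := by
    apply hk_cont.comp (Continuous.continuousOn (by continuity))
    intro r hr
    exact mem_Ioi.2 (by simp [sub_pos, hr.2])
  have h2 : ContinuousOn φ (Ioo 0 x) :=
    hφ.mono (fun r hr => ⟨hr.1.le, hr.2.le.trans hxT⟩)
  exact ((hmu_meas.aestronglyMeasurable.mul
    (h1.aestronglyMeasurable measurableSet_Ioo)).mul
    (h2.aestronglyMeasurable measurableSet_Ioo))

lemma g_int (hmu_meas : Measurable mu) (hmu0 : ∀ x > (0:ℝ), 0 ≤ mu x)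
    (hk0 : ∀ x > (0:ℝ), 0 ≤ k x)
    (hk_cont : ContinuousOn k (Set.Ioi 0))
    (hSonine : ∀ x > (0:ℝ), (∫ r in (0:ℝ)..x, mu r * k (x - r)) = 1)
    (hφ : ContinuousOn φ (Set.Icc 0 T))
    {M : ℝ} (hM : ∀ r ∈ Icc 0 T, ‖φ r‖ ≤ M)
    {x : ℝ} (hx : 0 < x) (hxT : x ≤ T) :
    IntegrableOn (fun r => mu r * k (x - r) * φ r) (Ioc 0 x) := by
  refine Integrable.mono' (((muk_int hSonine hx).const_mul M))
    (aesm_g hmu_meas hk_cont hφ hxT) ?_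
  have hne : ∀ᵐ r ∂(volume.restrict (Ioc 0 x)), r ≠ x :=
    ae_mono Measure.restrict_le_self (compl_mem_ae_iff.2 (measure_singleton x))
  filter_upwards [ae_restrict_mem measurableSet_Ioc, hne] with r hr hrx
  have h0r : 0 < r := hr.1
  have hrxlt : r < x := lt_of_le_of_ne hr.2 hrx
  have h1 : 0 ≤ mu r := hmu0 r h0r
  have h2 : 0 ≤ k (x - r) := hk0 _ (by linarith)
  have h3 : ‖φ r‖ ≤ M := hM r ⟨h0r.le, hr.2.trans hxT⟩
  have : ‖mu r * k (x - r) * φ r‖ = mu r * k (x - r) * ‖φ r‖ := by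
    rw [norm_mul, norm_mul, Real.norm_of_nonneg h1, Real.norm_of_nonneg h2]
  rw [this]
  have : 0 ≤ mu r * k (x - r) := mul_nonneg h1 h2
  nlinarith [norm_nonneg (φ r)]

lemma Kbound (hmu_meas : Measurable mu) (hmu0 : ∀ x > (0:ℝ), 0 ≤ mu x)
    (hk0 : ∀ x > (0:ℝ), 0 ≤ k x)
    (hk_cont : ContinuousOn k (Set.Ioi 0))
    (hSonine : ∀ x > (0:ℝ), (∫ r in (0:ℝ)..x, mu r * k (x - r)) = 1)
    (hφ : ContinuousOn φ (Set.Icc 0 T))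
    {M : ℝ} (hM : ∀ r ∈ Icc 0 T, ‖φ r‖ ≤ M) :
    ∀ x ∈ Set.Icc (0:ℝ) T,
      |Kop0 mu k φ x - φ 0| ≤ ⨆ r : Set.Icc (0:ℝ) x, |φ ↑r - φ 0| := by
  intro x hx
  set S := ⨆ r : Set.Icc (0:ℝ) x, |φ ↑r - φ 0| with hSdef
  have hbdd : BddAbove (range fun r : Set.Icc (0:ℝ) x => |φ ↑r - φ 0|) := by
    refine ⟨M + |φ 0|, ?_⟩
    rintro y ⟨r, rfl⟩
    have h1 := hM r ⟨r.2.1, r.2.2.trans hx.2⟩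
    rw [Real.norm_eq_abs] at h1
    calc |φ ↑r - φ 0| ≤ |φ ↑r| + |φ 0| := abs_sub _ _
      _ ≤ M + |φ 0| := by linarith
  haveI : Nonempty (Set.Icc (0:ℝ) x) := ⟨⟨0, le_refl _, hx.1⟩⟩
  have hS0 : 0 ≤ S := by
    have := le_ciSup hbdd (⟨0, le_refl _, hx.1⟩ : Set.Icc (0:ℝ) x)
    simpa using this
  rcases eq_or_lt_of_le hx.1 with h0 | hpos
  · simp [Kop0, ← h0, hS0]
  · have hxT := hx.2
    have hs := hSonine x hpos
    rw [intervalIntegral.integral_of_le hpos.le] at hs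
    have hint1 := muk_int hSonine hpos
    have hint2 := g_int hmu_meas hmu0 hk0 hk_cont hSonine hφ hM hpos hxT
    have key : Kop0 mu k φ x - φ 0
        = ∫ r in Ioc 0 x, mu r * k (x - r) * (φ r - φ 0) := by
      rw [Kop0, if_neg (ne_of_gt hpos), intervalIntegral.integral_of_le hpos.le]
      calc (∫ r in Ioc 0 x, mu r * k (x - r) * φ r) - φ 0
          = (∫ r in Ioc 0 x, mu r * k (x - r) * φ r)
            - (∫ r in Ioc 0 x, mu r * k (x - r) * φ 0) := by
            rw [integral_mul_const, hs, one_mul]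
        _ = ∫ r in Ioc 0 x, (mu r * k (x - r) * φ r - mu r * k (x - r) * φ 0) :=
            (integral_sub hint2 (hint1.mul_const _)).symm
        _ = _ := integral_congr_ae (Filter.Eventually.of_forall fun r => by ring)
    rw [key]
    have hb : ‖∫ r in Ioc 0 x, mu r * k (x - r) * (φ r - φ 0)‖
        ≤ ∫ r in Ioc 0 x, S * (mu r * k (x - r)) := by
      refine norm_integral_le_of_norm_le (hint1.const_mul S) ?_
      have hne : ∀ᵐ r ∂(volume.restrict (Ioc 0 x)), r ≠ x :=
        ae_mono Measure.restrict_le_self (compl_mem_ae_iff.2 (measure_singleton x))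
      filter_upwards [ae_restrict_mem measurableSet_Ioc, hne] with r hr hrx
      have h0r : 0 < r := hr.1
      have hrxlt : r < x := lt_of_le_of_ne hr.2 hrx
      have h1 : 0 ≤ mu r := hmu0 r h0r
      have h2 : 0 ≤ k (x - r) := hk0 _ (by linarith)
      have h3 : |φ r - φ 0| ≤ S := le_ciSup hbdd (⟨r, h0r.le, hr.2⟩ : Set.Icc (0:ℝ) x)
      have : ‖mu r * k (x - r) * (φ r - φ 0)‖ = mu r * k (x - r) * |φ r - φ 0| := by
        rw [norm_mul, norm_mul, Real.norm_of_nonneg h1, Real.norm_of_nonneg h2,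
          Real.norm_eq_abs]
      rw [this]
      nlinarith [abs_nonneg (φ r - φ 0), mul_nonneg h1 h2]
    rw [Real.norm_eq_abs] at hb
    calc |∫ r in Ioc 0 x, mu r * k (x - r) * (φ r - φ 0)|
        ≤ ∫ r in Ioc 0 x, S * (mu r * k (x - r)) := hb
      _ = S := by rw [integral_const_mul, hs, mul_one]

lemma cont0 (hmu_meas : Measurable mu) (hmu0 : ∀ x > (0:ℝ), 0 ≤ mu x)
    (hk0 : ∀ x > (0:ℝ), 0 ≤ k x)
    (hk_cont : ContinuousOn k (Set.Ioi 0))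
    (hSonine : ∀ x > (0:ℝ), (∫ r in (0:ℝ)..x, mu r * k (x - r)) = 1)
    (hT : 0 < T) (hφ : ContinuousOn φ (Set.Icc 0 T))
    {M : ℝ} (hM : ∀ r ∈ Icc 0 T, ‖φ r‖ ≤ M) :
    ContinuousWithinAt (Kop0 mu k φ) (Set.Icc 0 T) 0 := by
  have hK0 : Kop0 mu k φ 0 = φ 0 := by simp [Kop0]
  rw [Metric.continuousWithinAt_iff]
  intro ε hε
  have hφ0 := hφ 0 ⟨le_refl _, hT.le⟩
  rw [Metric.continuousWithinAt_iff] at hφ0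
  obtain ⟨δ, hδ, h⟩ := hφ0 (ε/2) (by linarith)
  refine ⟨δ, hδ, fun x hx hdist => ?_⟩
  rw [Real.dist_eq, hK0]
  haveI : Nonempty (Set.Icc (0:ℝ) x) := ⟨⟨0, le_refl _, hx.1⟩⟩
  have hsup : (⨆ r : Set.Icc (0:ℝ) x, |φ ↑r - φ 0|) ≤ ε/2 := by
    refine ciSup_le fun r => ?_
    have hr : (r:ℝ) ∈ Icc 0 T := ⟨r.2.1, r.2.2.trans hx.2⟩
    have hrd : dist (r:ℝ) 0 < δ := by
      rw [Real.dist_eq] at hdist ⊢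
      rw [sub_zero] at hdist ⊢
      rw [abs_of_nonneg r.2.1]
      calc (r:ℝ) ≤ x := r.2.2
        _ ≤ |x| := le_abs_self x
        _ < δ := hdist
    have := (h hr hrd).le
    rwa [Real.dist_eq] at this
  have hb := Kbound hmu_meas hmu0 hk0 hk_cont hSonine hφ hM x hx
  calc |Kop0 mu k φ x - φ 0| ≤ _ := hb
    _ ≤ ε/2 := hsup
    _ < ε := by linarith

set_option maxHeartbeats 2000000 in
lemma contpos (hmu_meas : Measurable mu)
    (hmu0 : ∀ x > (0:ℝ), 0 ≤ mu x) (hk0 : ∀ x > (0:ℝ), 0 ≤ k x)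
    (hmu_anti : AntitoneOn mu (Set.Ioi 0))
    (hk_cont : ContinuousOn k (Set.Ioi 0)) (hk_anti : AntitoneOn k (Set.Ioi 0))
    (hmu_loc : ∀ S > (0:ℝ), IntegrableOn mu (Set.Ioc 0 S))
    (hk_loc : ∀ S > (0:ℝ), IntegrableOn k (Set.Ioc 0 S))
    (hSonine : ∀ x > (0:ℝ), (∫ r in (0:ℝ)..x, mu r * k (x - r)) = 1)
    (hT : 0 < T) (hφ : ContinuousOn φ (Set.Icc 0 T))
    {M : ℝ} (hM : ∀ r ∈ Icc 0 T, ‖φ r‖ ≤ M) (hM0 : 0 ≤ M)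
    {x₀ : ℝ} (hx₀pos : 0 < x₀) (hx₀T : x₀ ≤ T) :
    ContinuousWithinAt (Kop0 mu k φ) (Set.Icc 0 T) x₀ := by
  rw [Metric.continuousWithinAt_iff]
  intro ε hε
  set K₂ := k (x₀/2) with hK₂def
  set M₂ := mu (x₀/2) with hM₂def
  have hK₂ : 0 ≤ K₂ := hk0 _ (by linarith)
  have hM₂ : 0 ≤ M₂ := hmu0 _ (by linarith)
  set c1 := K₂ * M + 1 with hc1def
  set c2 := M₂ * M + 1 with hc2def
  have hc1 : 0 < c1 := by nlinarith
  have hc2 : 0 < c2 := by nlinarith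
  -- primitives tend to 0
  have hprim : ∀ f : ℝ → ℝ, (∀ S > (0:ℝ), IntegrableOn f (Set.Ioc 0 S)) →
      Tendsto (fun t => ∫ r in Ioc 0 t, f r) (𝓝[>] (0:ℝ)) (𝓝 0) := by
    intro f hf
    have h1 : ContinuousOn (fun t => ∫ r in Ioc 0 t, f r) (Icc 0 T) :=
      intervalIntegral.continuousOn_primitive
        ((integrableOn_Icc_iff_integrableOn_Ioc (by simp)).2 (hf T hT))
    have h2 := h1 0 ⟨le_refl _, hT.le⟩
    have h3 : Tendsto (fun t => ∫ r in Ioc 0 t, f r) (𝓝[Icc 0 T] 0) (𝓝 0) := by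
      simpa [ContinuousWithinAt] using h2
    exact h3.mono_left (by
      rw [← nhdsWithin_Ioc_eq_nhdsGT hT]
      exact nhdsWithin_mono 0 Ioc_subset_Icc_self)
  have hev : ∀ᶠ t in 𝓝[>] (0:ℝ),
      (∫ r in Ioc 0 t, mu r) < ε/(5*c1) ∧ (∫ r in Ioc 0 t, k r) < ε/(5*c2)
        ∧ t < x₀/4 ∧ 0 < t := by
    have e1 := (hprim mu hmu_loc).eventually_lt_const (show (0:ℝ) < ε/(5*c1) by positivity)
    have e2 := (hprim k hk_loc).eventually_lt_const (show (0:ℝ) < ε/(5*c2) by positivity)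
    have e3 : ∀ᶠ t in 𝓝[>] (0:ℝ), t < x₀/4 :=
      eventually_nhdsWithin_of_eventually_nhds
        (eventually_iff_exists_mem.2 ⟨Iio (x₀/4), Iio_mem_nhds (by linarith), fun t ht => ht⟩)
    have e4 : ∀ᶠ t in 𝓝[>] (0:ℝ), (0:ℝ) < t := eventually_mem_nhdsWithin
    filter_upwards [e1, e2, e3, e4] with t h1 h2 h3 h4
    exact ⟨h1, h2, h3, h4⟩
  obtain ⟨δ₀, hδ1, hδ2, hδ3, hδ4⟩ := hev.exists
  set μ' := volume.restrict (Ioc δ₀ T) with hμ'def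
  set g : ℝ → ℝ → ℝ := fun x r => mu r * k (x - r) * φ r with hgdef
  set Fn : ℝ → ℝ → ℝ := fun x => (Ioc δ₀ (x - δ₀)).indicator (g x) with hFndef
  set C := mu δ₀ * (k δ₀ * M) with hCdef
  have hmuδ : 0 ≤ mu δ₀ := hmu0 _ hδ4
  have hkδ : 0 ≤ k δ₀ := hk0 _ hδ4
  have hC : 0 ≤ C := by positivity
  have hB : ContinuousAt (fun x => ∫ r, Fn x r ∂μ') x₀ := by
    apply continuousAt_of_dominated (bound := fun _ => C)
    · refine Eventually.of_forall fun x => ?_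
      show AEStronglyMeasurable ((Ioc δ₀ (x - δ₀)).indicator (g x)) μ'
      rw [aestronglyMeasurable_indicator_iff measurableSet_Ioc, hμ'def,
        Measure.restrict_restrict measurableSet_Ioc]
      have hs' : MeasurableSet (Ioc δ₀ (x - δ₀) ∩ Ioc δ₀ T) :=
        measurableSet_Ioc.inter measurableSet_Ioc
      have hkc : ContinuousOn (fun r => k (x - r)) (Ioc δ₀ (x - δ₀) ∩ Ioc δ₀ T) := by
        apply hk_cont.comp ((continuous_const.sub continuous_id).continuousOn)
        intro r hr
        have h1 : r ≤ x - δ₀ := hr.1.2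
        exact mem_Ioi.2 (by show 0 < x - r; linarith)
      have hφc : ContinuousOn φ (Ioc δ₀ (x - δ₀) ∩ Ioc δ₀ T) :=
        hφ.mono fun r hr => ⟨(hδ4.trans hr.2.1).le, hr.2.2⟩
      exact (hmu_meas.aestronglyMeasurable.mul
        (hkc.aestronglyMeasurable hs')).mul (hφc.aestronglyMeasurable hs')
    · refine Eventually.of_forall fun x => ?_
      rw [hμ'def]
      filter_upwards [ae_restrict_mem measurableSet_Ioc] with r hr
      by_cases hmem : r ∈ Ioc δ₀ (x - δ₀)
      · show ‖(Ioc δ₀ (x - δ₀)).indicator (g x) r‖ ≤ C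
        rw [indicator_of_mem hmem]
        have h1 : 0 < r := lt_trans hδ4 hr.1
        have hxr : δ₀ ≤ x - r := by have := hmem.2; linarith
        have h2a : 0 ≤ mu r := hmu0 r h1
        have h2b : mu r ≤ mu δ₀ := hmu_anti (mem_Ioi.2 hδ4) (mem_Ioi.2 h1) hr.1.le
        have h3a : 0 ≤ k (x - r) := hk0 _ (lt_of_lt_of_le hδ4 hxr)
        have h3b : k (x - r) ≤ k δ₀ :=
          hk_anti (mem_Ioi.2 hδ4) (mem_Ioi.2 (lt_of_lt_of_le hδ4 hxr)) hxr
        have h4 : |φ r| ≤ M := by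
          have := hM r ⟨h1.le, hr.2⟩; rwa [Real.norm_eq_abs] at this
        have heq : ‖g x r‖ = mu r * k (x - r) * |φ r| := by
          rw [hgdef]
          simp only []
          rw [norm_mul, norm_mul, Real.norm_of_nonneg h2a, Real.norm_of_nonneg h3a,
            Real.norm_eq_abs]
        rw [heq, hCdef]
        have e1 : mu r * k (x - r) ≤ mu δ₀ * k δ₀ := mul_le_mul h2b h3b h3a hmuδ
        nlinarith [mul_le_mul e1 h4 (abs_nonneg (φ r)) (mul_nonneg hmuδ hkδ)]
      · show ‖(Ioc δ₀ (x - δ₀)).indicator (g x) r‖ ≤ C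
        rw [indicator_of_notMem hmem]
        simpa using hC
    · show Integrable (fun _ => C) μ'
      rw [hμ'def]
      exact integrableOn_const measure_Ioc_lt_top.ne
    · have hne : ∀ᵐ r ∂μ', r ≠ x₀ - δ₀ :=
        ae_mono Measure.restrict_le_self (compl_mem_ae_iff.2 (measure_singleton _))
      filter_upwards [hne] with r hrne
      rcases lt_or_gt_of_ne hrne with hlt | hgt
      · by_cases hrδ : δ₀ < r
        · have hkc : ContinuousAt (fun x : ℝ => k (x - r)) x₀ := by
            have h0 : (0:ℝ) < x₀ - r := by linarith
            have : ContinuousAt k (x₀ - r) :=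
              hk_cont.continuousAt (Ioi_mem_nhds h0)
            have h2 : ContinuousAt (fun x : ℝ => x - r) x₀ :=
              (continuous_sub_right r).continuousAt
            exact ContinuousAt.comp this h2
          have hgc : ContinuousAt (fun x => g x r) x₀ :=
            (continuousAt_const.mul hkc).mul continuousAt_const
          apply hgc.congr_of_eventuallyEq
          have hev2 : ∀ᶠ x in 𝓝 x₀, r + δ₀ < x := eventually_gt_nhds (by linarith)
          filter_upwards [hev2] with x hx
          show Fn x r = g x r
          have hmem : r ∈ Ioc δ₀ (x - δ₀) := Set.mem_Ioc.2 ⟨hrδ, by linarith⟩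
          exact indicator_of_mem hmem (g x)
        · have : (fun x => Fn x r) = fun _ => 0 := by
            funext x
            exact indicator_of_notMem (fun hmem => hrδ hmem.1) (g x)
          rw [this]; exact continuousAt_const
      · apply continuousAt_const.congr_of_eventuallyEq
        have hev2 : ∀ᶠ x in 𝓝 x₀, x < r + δ₀ := eventually_lt_nhds (by linarith)
        filter_upwards [hev2] with x hx
        show Fn x r = (0:ℝ)
        exact indicator_of_notMem (fun hmem => by have := hmem.2; linarith) (g x)
  rw [Metric.continuousAt_iff] at hB
  obtain ⟨δ₁, hδ₁pos, hB1⟩ := hB (ε/5) (by linarith)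
  have hIμnn : 0 ≤ ∫ r in Ioc 0 δ₀, mu r :=
    setIntegral_nonneg measurableSet_Ioc (fun r hr => hmu0 r hr.1)
  have hIknn : 0 ≤ ∫ r in Ioc 0 δ₀, k r :=
    setIntegral_nonneg measurableSet_Ioc (fun r hr => hk0 r hr.1)
  have hAbnd : K₂ * M * (∫ r in Ioc 0 δ₀, mu r) < ε/5 := by
    have h1 : K₂ * M * (∫ r in Ioc 0 δ₀, mu r) ≤ c1 * (∫ r in Ioc 0 δ₀, mu r) :=
      mul_le_mul_of_nonneg_right (by nlinarith) hIμnn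
    have h2 : c1 * (∫ r in Ioc 0 δ₀, mu r) < c1 * (ε/(5*c1)) :=
      mul_lt_mul_of_pos_left hδ1 hc1
    have h3 : c1 * (ε/(5*c1)) = ε/5 := by field_simp
    linarith
  have hCbnd : M₂ * M * (∫ r in Ioc 0 δ₀, k r) < ε/5 := by
    have h1 : M₂ * M * (∫ r in Ioc 0 δ₀, k r) ≤ c2 * (∫ r in Ioc 0 δ₀, k r) :=
      mul_le_mul_of_nonneg_right (by nlinarith) hIknn
    have h2 : c2 * (∫ r in Ioc 0 δ₀, k r) < c2 * (ε/(5*c2)) :=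
      mul_lt_mul_of_pos_left hδ2 hc2
    have h3 : c2 * (ε/(5*c2)) = ε/5 := by field_simp
    linarith
  have claim : ∀ y ∈ Icc (0:ℝ) T, dist y x₀ < δ₀ →
      |Kop0 mu k φ y - ∫ r, Fn y r ∂μ'| < ε/5 + ε/5 := by
    intro y hy hyd
    rw [Real.dist_eq] at hyd
    have habs := abs_lt.1 hyd
    have hy1 : x₀ - δ₀ < y := by linarith [habs.1]
    have hy2 : y ≤ T := hy.2
    have hy3 : 0 < y := by linarith
    have hy5 : x₀/2 < y - δ₀ := by linarith
    have hgInt : IntegrableOn (g y) (Ioc 0 y) :=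
      g_int hmu_meas hmu0 hk0 hk_cont hSonine hφ hM hy3 hy2
    have hii : ∀ a b : ℝ, 0 ≤ a → a ≤ b → b ≤ y → IntervalIntegrable (g y) volume a b :=
      fun a b h1 h2 h3 => (intervalIntegrable_iff_integrableOn_Ioc_of_le h2).2
        (hgInt.mono_set (Ioc_subset_Ioc h1 h3))
    have hdec : Kop0 mu k φ y = (∫ r in (0:ℝ)..δ₀, g y r)
        + ((∫ r in δ₀..(y-δ₀), g y r) + ∫ r in (y-δ₀)..y, g y r) := by
      rw [Kop0, if_neg (ne_of_gt hy3)]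
      have e1 : (∫ r in δ₀..(y-δ₀), g y r) + (∫ r in (y-δ₀)..y, g y r)
          = ∫ r in δ₀..y, g y r :=
        intervalIntegral.integral_add_adjacent_intervals
          (hii δ₀ (y-δ₀) hδ4.le (by linarith) (by linarith))
          (hii (y-δ₀) y (by linarith) (by linarith) le_rfl)
      have e2 : (∫ r in (0:ℝ)..δ₀, g y r) + (∫ r in δ₀..y, g y r)
          = ∫ r in (0:ℝ)..y, g y r :=
        intervalIntegral.integral_add_adjacent_intervals
          (hii 0 δ₀ le_rfl hδ4.le (by linarith))
          (hii δ₀ y hδ4.le (by linarith) le_rfl)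
      rw [e1, e2]
    have hmid : (∫ r in δ₀..(y-δ₀), g y r) = ∫ r, Fn y r ∂μ' := by
      rw [intervalIntegral.integral_of_le (by linarith : δ₀ ≤ y - δ₀)]
      show _ = ∫ r, (Ioc δ₀ (y - δ₀)).indicator (g y) r ∂μ'
      rw [integral_indicator measurableSet_Ioc, hμ'def,
        Measure.restrict_restrict measurableSet_Ioc,
        inter_eq_self_of_subset_left (Ioc_subset_Ioc_right (by linarith : y - δ₀ ≤ T))]
    have hA : |∫ r in (0:ℝ)..δ₀, g y r| < ε/5 := by
      have hb : ‖∫ r in (0:ℝ)..δ₀, g y r‖ ≤ |∫ r in (0:ℝ)..δ₀, K₂ * M * mu r| := by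
        apply intervalIntegral.norm_integral_le_abs_of_norm_le ?_
          (((intervalIntegrable_iff_integrableOn_Ioc_of_le hδ4.le).2
            (hmu_loc δ₀ hδ4)).const_mul (K₂ * M))
        rw [uIoc_of_le hδ4.le]
        filter_upwards [ae_restrict_mem measurableSet_Ioc] with r hr
        have h0r : 0 < r := hr.1
        have hrT : r ∈ Icc 0 T := ⟨h0r.le, by linarith [hr.2]⟩
        have h1 : 0 ≤ mu r := hmu0 r h0r
        have hyr : x₀/2 ≤ y - r := by linarith [hr.2]
        have h3a : 0 ≤ k (y - r) := hk0 _ (by linarith)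
        have h3b : k (y - r) ≤ K₂ :=
          hk_anti (mem_Ioi.2 (by linarith)) (mem_Ioi.2 (by linarith)) hyr
        have h4 : |φ r| ≤ M := by
          have := hM r hrT; rwa [Real.norm_eq_abs] at this
        have heq : ‖g y r‖ = mu r * k (y - r) * |φ r| := by
          show ‖mu r * k (y - r) * φ r‖ = _
          rw [norm_mul, norm_mul, Real.norm_of_nonneg h1, Real.norm_of_nonneg h3a,
            Real.norm_eq_abs]
        rw [heq]
        show mu r * k (y - r) * |φ r| ≤ K₂ * M * mu r
        nlinarith [mul_le_mul h3b h4 (abs_nonneg (φ r)) hK₂,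
          mul_le_mul_of_nonneg_left (mul_le_mul h3b h4 (abs_nonneg (φ r)) hK₂) h1]
      rw [Real.norm_eq_abs] at hb
      have hval : (∫ r in (0:ℝ)..δ₀, K₂ * M * mu r)
          = K₂ * M * ∫ r in Ioc 0 δ₀, mu r := by
        rw [intervalIntegral.integral_const_mul, intervalIntegral.integral_of_le hδ4.le]
      rw [hval, abs_of_nonneg (mul_nonneg (mul_nonneg hK₂ hM0) hIμnn)] at hb
      exact lt_of_le_of_lt hb hAbnd
    have hC2 : |∫ r in (y-δ₀)..y, g y r| < ε/5 := by
      have hkI : IntervalIntegrable (fun r => k (y - r)) volume (y-δ₀) y := by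
        have h0 : IntervalIntegrable k volume 0 δ₀ :=
          (intervalIntegrable_iff_integrableOn_Ioc_of_le hδ4.le).2 (hk_loc δ₀ hδ4)
        have h1 := (h0.comp_sub_left y).symm
        simpa using h1
      have hb : ‖∫ r in (y-δ₀)..y, g y r‖
          ≤ |∫ r in (y-δ₀)..y, M₂ * M * k (y - r)| := by
        apply intervalIntegral.norm_integral_le_abs_of_norm_le ?_ (hkI.const_mul (M₂*M))
        rw [uIoc_of_le (by linarith : y - δ₀ ≤ y)]
        have hne : ∀ᵐ r ∂volume.restrict (Ioc (y-δ₀) y), r ≠ y :=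
          ae_mono Measure.restrict_le_self (compl_mem_ae_iff.2 (measure_singleton _))
        filter_upwards [ae_restrict_mem measurableSet_Ioc, hne] with r hr hrny
        have h0r : 0 < r := by linarith [hr.1]
        have hry : r < y := lt_of_le_of_ne hr.2 hrny
        have h2a : 0 ≤ mu r := hmu0 r h0r
        have h2b : mu r ≤ M₂ :=
          hmu_anti (mem_Ioi.2 (by linarith)) (mem_Ioi.2 h0r) (by linarith [hr.1])
        have h3a : 0 ≤ k (y - r) := hk0 _ (by linarith)
        have h4 : |φ r| ≤ M := by
          have := hM r ⟨h0r.le, hry.le.trans hy2⟩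
          rwa [Real.norm_eq_abs] at this
        have heq : ‖g y r‖ = mu r * k (y - r) * |φ r| := by
          show ‖mu r * k (y - r) * φ r‖ = _
          rw [norm_mul, norm_mul, Real.norm_of_nonneg h2a, Real.norm_of_nonneg h3a,
            Real.norm_eq_abs]
        rw [heq]
        show mu r * k (y - r) * |φ r| ≤ M₂ * M * k (y - r)
        nlinarith [mul_le_mul_of_nonneg_right
          (mul_le_mul h2b h4 (abs_nonneg (φ r)) hM₂) h3a]
      rw [Real.norm_eq_abs] at hb
      have hval : (∫ r in (y-δ₀)..y, M₂ * M * k (y - r))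
          = M₂ * M * ∫ r in Ioc 0 δ₀, k r := by
        rw [intervalIntegral.integral_const_mul]
        congr 1
        have h1 := intervalIntegral.integral_comp_sub_left (a := y - δ₀) (b := y) k y
        rw [h1]
        have e1 : y - y = (0:ℝ) := by ring
        have e2 : y - (y - δ₀) = δ₀ := by ring
        rw [e1, e2, intervalIntegral.integral_of_le hδ4.le]
      rw [hval, abs_of_nonneg (mul_nonneg (mul_nonneg hM₂ hM0) hIknn)] at hb
      exact lt_of_le_of_lt hb hCbnd
    rw [hdec, hmid]
    have e : (∫ r in (0:ℝ)..δ₀, g y r)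
        + ((∫ r, Fn y r ∂μ') + ∫ r in (y-δ₀)..y, g y r) - (∫ r, Fn y r ∂μ')
        = (∫ r in (0:ℝ)..δ₀, g y r) + ∫ r in (y-δ₀)..y, g y r := by ring
    rw [e]
    calc |(∫ r in (0:ℝ)..δ₀, g y r) + ∫ r in (y-δ₀)..y, g y r|
        ≤ |∫ r in (0:ℝ)..δ₀, g y r| + |∫ r in (y-δ₀)..y, g y r| := abs_add_le _ _
      _ < ε/5 + ε/5 := by linarith
  refine ⟨min δ₀ δ₁, lt_min hδ4 hδ₁pos, fun x hx hxd => ?_⟩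
  have hx₀Icc : x₀ ∈ Icc (0:ℝ) T := ⟨hx₀pos.le, hx₀T⟩
  have c1' := claim x hx (lt_of_lt_of_le hxd (min_le_left _ _))
  have c2' := claim x₀ hx₀Icc (by rw [dist_self]; exact hδ4)
  have c3' := hB1 (lt_of_lt_of_le hxd (min_le_right _ _))
  rw [Real.dist_eq] at c3' ⊢
  have t1 : |Kop0 mu k φ x - Kop0 mu k φ x₀|
      ≤ |Kop0 mu k φ x - ∫ r, Fn x r ∂μ'|
        + |(∫ r, Fn x r ∂μ') - ∫ r, Fn x₀ r ∂μ'|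
        + |Kop0 mu k φ x₀ - ∫ r, Fn x₀ r ∂μ'| := by
    have u1 := abs_sub_le (Kop0 mu k φ x) (∫ r, Fn x r ∂μ') (Kop0 mu k φ x₀)
    have u2 := abs_sub_le (∫ r, Fn x r ∂μ') (∫ r, Fn x₀ r ∂μ') (Kop0 mu k φ x₀)
    have u3 := abs_sub_comm (∫ r, Fn x₀ r ∂μ') (Kop0 mu k φ x₀)
    linarith
  linarith

end Aux

/-- `K` maps `C[0,T]` into `C[0,T]`; in particular
`|Kφ(x) - φ(0)| ≤ sup_{r∈[0,x]} |φ(r) - φ(0)|`, so `Kφ` is continuous at `0`. -/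
theorem K_maps_continuous_into_continuous
    (mu k : ℝ → ℝ) (hmu_meas : Measurable mu)
    (hmu0 : ∀ x > (0:ℝ), 0 ≤ mu x) (hk0 : ∀ x > (0:ℝ), 0 ≤ k x)
    (hmu_anti : AntitoneOn mu (Set.Ioi 0))
    (hk_cont : ContinuousOn k (Set.Ioi 0)) (hk_anti : AntitoneOn k (Set.Ioi 0))
    (hmu_loc : ∀ S > (0:ℝ), IntegrableOn mu (Set.Ioc 0 S))
    (hk_loc : ∀ S > (0:ℝ), IntegrableOn k (Set.Ioc 0 S))
    (hSonine : ∀ x > (0:ℝ), (∫ r in (0:ℝ)..x, mu r * k (x - r)) = 1)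
    (T : ℝ) (hT : 0 < T)
    (φ : ℝ → ℝ) (hφ : ContinuousOn φ (Set.Icc 0 T)) :
    ContinuousOn (Kop0 mu k φ) (Set.Icc 0 T) ∧
      ∀ x ∈ Set.Icc (0:ℝ) T,
        |Kop0 mu k φ x - φ 0| ≤ ⨆ r : Set.Icc (0:ℝ) x, |φ ↑r - φ 0| := by
  obtain ⟨M, hM⟩ := isCompact_Icc.exists_bound_of_continuousOn hφ
  have hM0 : 0 ≤ M := le_trans (norm_nonneg _) (hM 0 ⟨le_refl _, hT.le⟩)
  constructor
  · intro x₀ hx₀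
    rcases eq_or_lt_of_le hx₀.1 with h0 | hpos
    · rw [← h0]
      exact cont0 hmu_meas hmu0 hk0 hk_cont hSonine hT hφ hM
    · exact contpos hmu_meas hmu0 hk0 hmu_anti hk_cont hk_anti hmu_loc hk_loc
        hSonine hT hφ hM hM0 hpos hx₀.2
  · exact Kbound hmu_meas hmu0 hk0 hk_cont hSonine hφ hM
end

section
/- Let (μ̄,k) be a positive Sonine pair arising from a complete Bernstein function f with q := sup_{x∈[0,T]} μ̄(x)∫₀^x k(s)ds < 1, and let C denote the censored fractional integral C g = Σ_{i≥0} K^i[I g]. Then for every i ∈ ℕ, (C)^i 𝟙(x) ≤ (1-q)^{-i} (I)^{i-1} K̂(x) for all x ∈ [0,T], where K̂(x) = ∫₀^x k(y) dy, I is convolution with k, and 𝟙 is the constant function 1. -/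
open MeasureTheory Real Set

lemma aux_ae_Ioo {x : ℝ} {p : ℝ → Prop} (h : ∀ t ∈ Set.Ioo 0 x, p t) :
    ∀ᵐ t ∂(volume.restrict (Set.Ioc 0 x)), p t := by
  have h0 : ∀ᵐ (t : ℝ), t ≠ x := by
    rw [ae_iff]; simpa using measure_singleton x
  filter_upwards [ae_restrict_mem measurableSet_Ioc,
    h0.filter_mono (ae_mono Measure.restrict_le_self)] with t ht hne
  exact h t ⟨ht.1, lt_of_le_of_ne ht.2 hne⟩

lemma aux_int_nonneg {f : ℝ → ℝ} {x : ℝ} (hx : 0 ≤ x)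
    (h : ∀ t ∈ Set.Ioo 0 x, 0 ≤ f t) : 0 ≤ ∫ t in (0:ℝ)..x, f t := by
  rw [intervalIntegral.integral_of_le hx]
  exact integral_nonneg_of_ae (aux_ae_Ioo h)

lemma aux_int_mono {f g : ℝ → ℝ} {x : ℝ} (hx : 0 ≤ x)
    (hg : IntegrableOn g (Set.Ioc 0 x))
    (h0 : ∀ t ∈ Set.Ioo 0 x, 0 ≤ f t)
    (hle : ∀ t ∈ Set.Ioo 0 x, f t ≤ g t) :
    ∫ t in (0:ℝ)..x, f t ≤ ∫ t in (0:ℝ)..x, g t := by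
  rw [intervalIntegral.integral_of_le hx, intervalIntegral.integral_of_le hx]
  exact integral_mono_of_nonneg (aux_ae_Ioo h0) hg (aux_ae_Ioo hle)

lemma aux_intInt_refl {f : ℝ → ℝ} {x : ℝ} (h : IntervalIntegrable f volume 0 x) :
    IntervalIntegrable (fun t => f (x - t)) volume 0 x := by
  have := (h.comp_sub_left x).symm
  simpa using this

lemma aux_meas_param {F : ℝ → ℝ → ℝ} (hF : Measurable (Function.uncurry F)) :
    Measurable fun x => ∫ t in (0:ℝ)..x, F x t := by
  have key : ∀ c : Set (ℝ × ℝ), MeasurableSet c →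
      Measurable fun x => ∫ t, Set.indicator {t | (x, t) ∈ c} (F x) t := by
    intro c hc
    have hm : StronglyMeasurable fun p : ℝ × ℝ =>
        Set.indicator {t | (p.1, t) ∈ c} (F p.1) p.2 := by
      apply Measurable.stronglyMeasurable
      have heq : (fun p : ℝ × ℝ => Set.indicator {t | (p.1, t) ∈ c} (F p.1) p.2)
          = c.indicator (Function.uncurry F) := by
        funext p
        rcases p with ⟨a, b⟩
        simp only [Set.indicator, Function.uncurry]
        rfl
      rw [heq]
      exact hF.indicator hc
    exact hm.integral_prod_right'.measurable
  have h1 : Measurable fun x => ∫ t in Set.Ioc (0:ℝ) x, F x t := by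
    have k1 := key {p : ℝ × ℝ | 0 < p.2 ∧ p.2 ≤ p.1}
      ((measurableSet_lt measurable_const measurable_snd).inter
        (measurableSet_le measurable_snd measurable_fst))
    have heq : (fun x => ∫ t, Set.indicator {t | (x, t) ∈ {p : ℝ × ℝ | 0 < p.2 ∧ p.2 ≤ p.1}} (F x) t)
        = fun x => ∫ t in Set.Ioc (0:ℝ) x, F x t := by
      funext x
      have hs : {t | (x, t) ∈ {p : ℝ × ℝ | 0 < p.2 ∧ p.2 ≤ p.1}} = Set.Ioc (0:ℝ) x := by
        ext t; simp [Set.mem_Ioc]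
      rw [hs, ← integral_indicator measurableSet_Ioc]
    rw [← heq]; exact k1
  have h2 : Measurable fun x => ∫ t in Set.Ioc x (0:ℝ), F x t := by
    have k2 := key {p : ℝ × ℝ | p.1 < p.2 ∧ p.2 ≤ 0}
      ((measurableSet_lt measurable_fst measurable_snd).inter
        (measurableSet_le measurable_snd measurable_const))
    have heq : (fun x => ∫ t, Set.indicator {t | (x, t) ∈ {p : ℝ × ℝ | p.1 < p.2 ∧ p.2 ≤ 0}} (F x) t)
        = fun x => ∫ t in Set.Ioc x (0:ℝ), F x t := by
      funext x
      have hs : {t | (x, t) ∈ {p : ℝ × ℝ | p.1 < p.2 ∧ p.2 ≤ 0}} = Set.Ioc x (0:ℝ) := by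
        ext t; simp [Set.mem_Ioc]
      rw [hs, ← integral_indicator measurableSet_Ioc]
    rw [← heq]; exact k2
  have hdef : (fun x => ∫ t in (0:ℝ)..x, F x t)
      = fun x => (∫ t in Set.Ioc (0:ℝ) x, F x t) - ∫ t in Set.Ioc x (0:ℝ), F x t := by
    funext x; rfl
  rw [hdef]
  exact h1.sub h2

/-- `K̂(y) = ∫₀^y k`. -/
noncomputable def Khat (k : ℝ → ℝ) : ℝ → ℝ := fun y => ∫ s in (0:ℝ)..y, k s

/-- The operator `Kφ(x) = ∫₀^x μ̄(r) k(x-r) φ(r) dr`. -/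
noncomputable def Kop (mu k : ℝ → ℝ) (φ : ℝ → ℝ) : ℝ → ℝ :=
  fun x => ∫ r in (0:ℝ)..x, mu r * k (x - r) * φ r

/-- Convolution with `k`: `Iψ(x) = ∫₀^x k(x-r) ψ(r) dr`. -/
noncomputable def Iop (k : ℝ → ℝ) (ψ : ℝ → ℝ) : ℝ → ℝ :=
  fun x => ∫ r in (0:ℝ)..x, k (x - r) * ψ r

/-- The censored fractional integral `Cg = Σ_{i≥0} K^i[Ig]`. -/
noncomputable def Cop (mu k : ℝ → ℝ) (g : ℝ → ℝ) : ℝ → ℝ :=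
  fun x => ∑' i : ℕ, (Kop mu k)^[i] (Iop k g) x

/-- If `q = sup_{x∈(0,T]} μ̄(x)∫₀^x k < 1`, then for all `i ≥ 1` and `x ∈ [0,T]`,
`(C)^i 𝟙(x) ≤ (1-q)^{-i} (I)^{i-1} K̂(x)` where `K̂(x) = ∫₀^x k`. -/
theorem iterated_censored_integral_bound
    (mu k : ℝ → ℝ) (hmu_meas : Measurable mu)
    (hk_meas : Measurable k) (hk_cont : ContinuousOn k (Set.Ioi 0))
    (hmu0 : ∀ x > (0:ℝ), 0 ≤ mu x) (hk0 : ∀ x > (0:ℝ), 0 ≤ k x)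
    (hmu_anti : AntitoneOn mu (Set.Ioi 0))
    (hmu_loc : ∀ S > (0:ℝ), IntegrableOn mu (Set.Ioc 0 S))
    (hk_loc : ∀ S > (0:ℝ), IntegrableOn k (Set.Ioc 0 S))
    (hSonine : ∀ x > (0:ℝ), (∫ t in (0:ℝ)..x, mu (x - t) * k t) = 1)
    (T : ℝ) (hT : 0 < T)
    (q : ℝ) (hq : q = ⨆ x : Set.Ioc (0:ℝ) T, mu ↑x * ∫ s in (0:ℝ)..(x:ℝ), k s)
    (hq1 : q < 1) :
    ∀ i : ℕ, 1 ≤ i → ∀ x ∈ Set.Icc (0:ℝ) T,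
      (Cop mu k)^[i] (fun _ => (1:ℝ)) x
        ≤ (1 / (1 - q)) ^ i *
            (Iop k)^[i - 1] (fun y => ∫ s in (0:ℝ)..y, k s) x := by
  -- basic integrability facts
  have hSonineInt : ∀ x : ℝ, 0 < x → IntervalIntegrable (fun t => mu (x - t) * k t) volume 0 x := by
    intro x hx
    by_contra hcon
    have h0 := intervalIntegral.integral_undef hcon
    rw [hSonine x hx] at h0
    norm_num at h0
  have hkInt : ∀ x : ℝ, 0 < x → IntervalIntegrable k volume 0 x := by
    intro x hx
    rw [intervalIntegrable_iff_integrableOn_Ioc_of_le hx.le]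
    exact hk_loc x hx
  have hkrefl : ∀ x : ℝ, 0 < x → IntegrableOn (fun r => k (x - r)) (Set.Ioc 0 x) := by
    intro x hx
    exact (intervalIntegrable_iff_integrableOn_Ioc_of_le hx.le).mp (aux_intInt_refl (hkInt x hx))
  -- the sup bound
  have hq_le : ∀ r ∈ Set.Ioc (0:ℝ) T, mu r * (∫ s in (0:ℝ)..r, k s) ≤ q := by
    have hb1 : ∀ s ∈ Set.Ioc (0:ℝ) T, mu s * (∫ t in (0:ℝ)..s, k t) ≤ 1 := by
      intro s hs
      have h1 : mu s * (∫ t in (0:ℝ)..s, k t) = ∫ t in (0:ℝ)..s, mu s * k t := by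
        rw [intervalIntegral.integral_const_mul]
      rw [h1]
      have h2 : (∫ t in (0:ℝ)..s, mu s * k t) ≤ ∫ t in (0:ℝ)..s, mu (s - t) * k t := by
        apply aux_int_mono hs.1.le
          ((intervalIntegrable_iff_integrableOn_Ioc_of_le hs.1.le).mp (hSonineInt s hs.1))
        · intro t ht; exact mul_nonneg (hmu0 s hs.1) (hk0 t ht.1)
        · intro t ht
          have hm : mu s ≤ mu (s - t) :=
            hmu_anti (Set.mem_Ioi.mpr (by linarith [ht.1, ht.2])) (Set.mem_Ioi.mpr hs.1)
              (by linarith [ht.1])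
          exact mul_le_mul_of_nonneg_right hm (hk0 t ht.1)
      rw [hSonine s hs.1] at h2
      exact h2
    have hbdd : BddAbove (Set.range fun y : Set.Ioc (0:ℝ) T =>
        mu ↑y * ∫ s in (0:ℝ)..(y:ℝ), k s) := by
      refine ⟨1, ?_⟩
      rintro _ ⟨⟨y, hy⟩, rfl⟩
      exact hb1 y hy
    intro r hr
    rw [hq]
    exact le_ciSup hbdd (⟨r, hr⟩ : Set.Ioc (0:ℝ) T)
  have hKhat_nonneg : ∀ y : ℝ, 0 ≤ y → 0 ≤ Khat k y := by
    intro y hy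
    exact aux_int_nonneg hy fun t ht => hk0 t ht.1
  have hq0 : 0 ≤ q :=
    le_trans (mul_nonneg (hmu0 T hT) (hKhat_nonneg T hT.le)) (hq_le T ⟨hT, le_refl T⟩)
  have hc0 : (0:ℝ) ≤ 1 / (1 - q) := div_nonneg zero_le_one (by linarith)
  -- integrability of k(x-·)θ(·)
  have hIntkθ : ∀ (θ : ℝ → ℝ), Measurable θ → (∀ y ∈ Set.Icc (0:ℝ) T, 0 ≤ θ y) →
      (∀ a b : ℝ, 0 ≤ a → a ≤ b → b ≤ T → θ a ≤ θ b) →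
      ∀ x : ℝ, 0 ≤ x → x ≤ T → IntegrableOn (fun r => k (x - r) * θ r) (Set.Ioc 0 x) := by
    intro θ hθm hθ0 hθmono x hx0 hxT
    rcases eq_or_lt_of_le hx0 with h | h
    · rw [← h]; simp
    · have h1 : Integrable (fun r => θ r * k (x - r)) (volume.restrict (Set.Ioc 0 x)) := by
        apply Integrable.bdd_mul (c := θ x) (hkrefl x h) hθm.aestronglyMeasurable
        filter_upwards [ae_restrict_mem measurableSet_Ioc] with r hr
        rw [Real.norm_eq_abs, abs_of_nonneg (hθ0 r ⟨hr.1.le, hr.2.trans hxT⟩)]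
        exact hθmono r x hr.1.le hr.2 hxT
      have heq : (fun r => k (x - r) * θ r) = fun r => θ r * k (x - r) := by
        funext r; ring
      rw [heq]; exact h1
  -- reflected version
  have hIntkθrev : ∀ (θ : ℝ → ℝ), Measurable θ → (∀ y ∈ Set.Icc (0:ℝ) T, 0 ≤ θ y) →
      (∀ a b : ℝ, 0 ≤ a → a ≤ b → b ≤ T → θ a ≤ θ b) →
      ∀ a b : ℝ, 0 < a → a ≤ b → b ≤ T →
      IntegrableOn (fun s => k s * θ (b - s)) (Set.Ioc 0 a) := by
    intro θ hθm hθ0 hθmono a b ha hab hbT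
    have h1 : Integrable (fun s => θ (b - s) * k s) (volume.restrict (Set.Ioc 0 a)) := by
      apply Integrable.bdd_mul (c := θ b) (hk_loc a ha)
        ((hθm.comp (measurable_const.sub measurable_id)).aestronglyMeasurable)
      filter_upwards [ae_restrict_mem measurableSet_Ioc] with s hs
      simp only [Function.comp_apply, id_eq, Pi.sub_apply]
      rw [Real.norm_eq_abs, abs_of_nonneg (hθ0 (b - s) ⟨by linarith [hs.2], by linarith [hs.1]⟩)]
      exact hθmono (b - s) b (by linarith [hs.2]) (by linarith [hs.1]) hbT
    have heq : (fun s => k s * θ (b - s)) = fun s => θ (b - s) * k s := by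
      funext s; ring
    rw [heq]; exact h1
  -- Iop preserves the properties
  have hI_props : ∀ (θ : ℝ → ℝ), Measurable θ → (∀ y ∈ Set.Icc (0:ℝ) T, 0 ≤ θ y) →
      (∀ a b : ℝ, 0 ≤ a → a ≤ b → b ≤ T → θ a ≤ θ b) →
      Measurable (Iop k θ) ∧ (∀ y ∈ Set.Icc (0:ℝ) T, 0 ≤ Iop k θ y) ∧
      (∀ a b : ℝ, 0 ≤ a → a ≤ b → b ≤ T → Iop k θ a ≤ Iop k θ b) := by
    intro θ hθm hθ0 hθmono
    have hIop_eq : ∀ x : ℝ, Iop k θ x = ∫ s in (0:ℝ)..x, k s * θ (x - s) := by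
      intro x
      simp only [Iop]
      have h1 : (fun r => k (x - r) * θ r) = fun r => (fun s => k s * θ (x - s)) (x - r) := by
        funext r; simp [sub_sub_cancel]
      rw [h1, intervalIntegral.integral_comp_sub_left (fun s => k s * θ (x - s)) x]
      simp
    refine ⟨?_, ?_, ?_⟩
    · have := aux_meas_param
        (F := fun x t => k (x - t) * θ t)
        (((hk_meas.comp (measurable_fst.sub measurable_snd)).mul (hθm.comp measurable_snd)))
      exact this
    · intro y hy
      simp only [Iop]
      exact aux_int_nonneg hy.1 fun t ht =>
        mul_nonneg (hk0 _ (sub_pos.mpr ht.2)) (hθ0 t ⟨ht.1.le, ht.2.le.trans hy.2⟩)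
    · intro a b ha hab hbT
      rcases eq_or_lt_of_le ha with h0 | h0
      · have hIa : Iop k θ a = 0 := by
          simp only [Iop, ← h0, intervalIntegral.integral_same]
        rw [hIa]
        simp only [Iop]
        exact aux_int_nonneg (by linarith) fun t ht =>
          mul_nonneg (hk0 _ (sub_pos.mpr ht.2)) (hθ0 t ⟨ht.1.le, ht.2.le.trans hbT⟩)
      · rw [hIop_eq a, hIop_eq b]
        have hb0 : 0 < b := lt_of_lt_of_le h0 hab
        calc (∫ s in (0:ℝ)..a, k s * θ (a - s))
            ≤ ∫ s in (0:ℝ)..a, k s * θ (b - s) := by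
              apply aux_int_mono ha (hIntkθrev θ hθm hθ0 hθmono a b h0 hab hbT)
              · intro s hs
                exact mul_nonneg (hk0 s hs.1)
                  (hθ0 (a - s) ⟨by linarith [hs.2], by linarith [hs.1]⟩)
              · intro s hs
                exact mul_le_mul_of_nonneg_left
                  (hθmono (a - s) (b - s) (by linarith [hs.2]) (by linarith) (by linarith [hs.1]))
                  (hk0 s hs.1)
          _ ≤ ∫ s in (0:ℝ)..b, k s * θ (b - s) := by
              rw [intervalIntegral.integral_of_le ha, intervalIntegral.integral_of_le (ha.trans hab)]
              refine setIntegral_mono_set (hIntkθrev θ hθm hθ0 hθmono b b hb0 le_rfl hbT) ?_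
                (HasSubset.Subset.eventuallyLE (Set.Ioc_subset_Ioc_right hab))
              exact (ae_restrict_mem measurableSet_Ioc).mono fun s hs =>
                mul_nonneg (hk0 s hs.1) (hθ0 (b - s) ⟨by linarith [hs.2], by linarith [hs.1]⟩)
  -- the key pointwise bound
  have hKey : ∀ (θ : ℝ → ℝ), Measurable θ → (∀ y ∈ Set.Icc (0:ℝ) T, 0 ≤ θ y) →
      (∀ a b : ℝ, 0 ≤ a → a ≤ b → b ≤ T → θ a ≤ θ b) →
      ∀ r ∈ Set.Ioc (0:ℝ) T, mu r * Iop k θ r ≤ q * θ r := by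
    intro θ hθm hθ0 hθmono r hr
    have hIle : Iop k θ r ≤ θ r * ∫ s in (0:ℝ)..r, k s := by
      have h2 : (∫ s in (0:ℝ)..r, k (r - s) * θ s) ≤ ∫ s in (0:ℝ)..r, k (r - s) * θ r := by
        apply aux_int_mono hr.1.le ((hkrefl r hr.1).mul_const (θ r))
        · intro s hs
          exact mul_nonneg (hk0 _ (sub_pos.mpr hs.2)) (hθ0 s ⟨hs.1.le, hs.2.le.trans hr.2⟩)
        · intro s hs
          exact mul_le_mul_of_nonneg_left (hθmono s r hs.1.le hs.2.le hr.2)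
            (hk0 _ (sub_pos.mpr hs.2))
      have h3 : (∫ s in (0:ℝ)..r, k (r - s) * θ r) = (∫ s in (0:ℝ)..r, k (r - s)) * θ r :=
        intervalIntegral.integral_mul_const _ _
      have h4 : (∫ s in (0:ℝ)..r, k (r - s)) = ∫ s in (0:ℝ)..r, k s := by
        rw [intervalIntegral.integral_comp_sub_left k r]; simp
      simp only [Iop]
      rw [mul_comm (θ r)]
      calc (∫ s in (0:ℝ)..r, k (r - s) * θ s) ≤ ∫ s in (0:ℝ)..r, k (r - s) * θ r := h2
        _ = (∫ s in (0:ℝ)..r, k s) * θ r := by rw [h3, h4]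
    calc mu r * Iop k θ r ≤ mu r * (θ r * ∫ s in (0:ℝ)..r, k s) :=
          mul_le_mul_of_nonneg_left hIle (hmu0 r hr.1)
      _ = (mu r * ∫ s in (0:ℝ)..r, k s) * θ r := by ring
      _ ≤ q * θ r := mul_le_mul_of_nonneg_right (hq_le r hr) (hθ0 r ⟨hr.1.le, hr.2⟩)
  -- the master bound for Cop
  have hM : ∀ (θ : ℝ → ℝ), Measurable θ → (∀ y ∈ Set.Icc (0:ℝ) T, 0 ≤ θ y) →
      (∀ a b : ℝ, 0 ≤ a → a ≤ b → b ≤ T → θ a ≤ θ b) →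
      ∀ h : ℝ → ℝ, (∀ y ∈ Set.Icc (0:ℝ) T, 0 ≤ h y ∧ h y ≤ θ y) →
      ∀ x ∈ Set.Icc (0:ℝ) T, Cop mu k h x ≤ (1 / (1 - q)) * Iop k θ x := by
    intro θ hθm hθ0 hθmono h hh
    have hA : ∀ n : ℕ, ∀ x ∈ Set.Icc (0:ℝ) T,
        0 ≤ (Kop mu k)^[n] (Iop k h) x ∧
        (Kop mu k)^[n] (Iop k h) x ≤ q ^ n * Iop k θ x := by
      intro n
      induction n with
      | zero =>
        intro x hx
        simp only [Function.iterate_zero, id_eq, pow_zero, one_mul]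
        constructor
        · simp only [Iop]
          exact aux_int_nonneg hx.1 fun t ht =>
            mul_nonneg (hk0 _ (sub_pos.mpr ht.2)) (hh t ⟨ht.1.le, ht.2.le.trans hx.2⟩).1
        · simp only [Iop]
          exact aux_int_mono hx.1 (hIntkθ θ hθm hθ0 hθmono x hx.1 hx.2)
            (fun t ht => mul_nonneg (hk0 _ (sub_pos.mpr ht.2)) (hh t ⟨ht.1.le, ht.2.le.trans hx.2⟩).1)
            (fun t ht => mul_le_mul_of_nonneg_left (hh t ⟨ht.1.le, ht.2.le.trans hx.2⟩).2
              (hk0 _ (sub_pos.mpr ht.2)))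
      | succ n ih =>
        intro x hx
        rw [Function.iterate_succ_apply']
        constructor
        · simp only [Kop]
          exact aux_int_nonneg hx.1 fun r hr =>
            mul_nonneg (mul_nonneg (hmu0 r hr.1) (hk0 _ (sub_pos.mpr hr.2)))
              (ih r ⟨hr.1.le, hr.2.le.trans hx.2⟩).1
        · simp only [Kop]
          have hstep : (∫ r in (0:ℝ)..x, mu r * k (x - r) * (Kop mu k)^[n] (Iop k h) r)
              ≤ ∫ r in (0:ℝ)..x, q ^ (n + 1) * (k (x - r) * θ r) := by
            apply aux_int_mono hx.1 ((hIntkθ θ hθm hθ0 hθmono x hx.1 hx.2).const_mul _)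
            · intro r hr
              exact mul_nonneg (mul_nonneg (hmu0 r hr.1) (hk0 _ (sub_pos.mpr hr.2)))
                (ih r ⟨hr.1.le, hr.2.le.trans hx.2⟩).1
            · intro r hr
              have hrT : r ∈ Set.Icc (0:ℝ) T := ⟨hr.1.le, hr.2.le.trans hx.2⟩
              have h2 : mu r * Iop k θ r ≤ q * θ r :=
                hKey θ hθm hθ0 hθmono r ⟨hr.1, hr.2.le.trans hx.2⟩
              calc mu r * k (x - r) * (Kop mu k)^[n] (Iop k h) r
                  ≤ mu r * k (x - r) * (q ^ n * Iop k θ r) :=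
                    mul_le_mul_of_nonneg_left (ih r hrT).2
                      (mul_nonneg (hmu0 r hr.1) (hk0 _ (sub_pos.mpr hr.2)))
                _ = q ^ n * (k (x - r) * (mu r * Iop k θ r)) := by ring
                _ ≤ q ^ n * (k (x - r) * (q * θ r)) := by
                    apply mul_le_mul_of_nonneg_left _ (pow_nonneg hq0 n)
                    exact mul_le_mul_of_nonneg_left h2 (hk0 _ (sub_pos.mpr hr.2))
                _ = q ^ (n + 1) * (k (x - r) * θ r) := by ring
          calc (∫ r in (0:ℝ)..x, mu r * k (x - r) * (Kop mu k)^[n] (Iop k h) r)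
              ≤ ∫ r in (0:ℝ)..x, q ^ (n + 1) * (k (x - r) * θ r) := hstep
            _ = q ^ (n + 1) * Iop k θ x := by
                rw [intervalIntegral.integral_const_mul]; rfl
    intro x hx
    have hI0 : 0 ≤ Iop k θ x := by
      simp only [Iop]
      exact aux_int_nonneg hx.1 fun t ht =>
        mul_nonneg (hk0 _ (sub_pos.mpr ht.2)) (hθ0 t ⟨ht.1.le, ht.2.le.trans hx.2⟩)
    by_cases hsum : Summable fun n : ℕ => (Kop mu k)^[n] (Iop k h) x
    · have hle := Summable.tsum_le_tsum (fun n => (hA n x hx).2) hsum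
        ((summable_geometric_of_lt_one hq0 hq1).mul_right _)
      simp only [Cop]
      calc (∑' n : ℕ, (Kop mu k)^[n] (Iop k h) x)
          ≤ ∑' n : ℕ, q ^ n * Iop k θ x := hle
        _ = (∑' n : ℕ, q ^ n) * Iop k θ x := tsum_mul_right
        _ = (1 - q)⁻¹ * Iop k θ x := by rw [tsum_geometric_of_lt_one hq0 hq1]
        _ = 1 / (1 - q) * Iop k θ x := by rw [one_div]
    · simp only [Cop]
      rw [tsum_eq_zero_of_not_summable hsum]
      exact mul_nonneg hc0 hI0
  -- nonnegativity of Cop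
  have hCnn : ∀ (g : ℝ → ℝ), (∀ y ∈ Set.Icc (0:ℝ) T, 0 ≤ g y) →
      ∀ x ∈ Set.Icc (0:ℝ) T, 0 ≤ Cop mu k g x := by
    intro g hg x hx
    have hn : ∀ n : ℕ, ∀ y ∈ Set.Icc (0:ℝ) T, 0 ≤ (Kop mu k)^[n] (Iop k g) y := by
      intro n
      induction n with
      | zero =>
        intro y hy
        simp only [Function.iterate_zero, id_eq, Iop]
        exact aux_int_nonneg hy.1 fun t ht =>
          mul_nonneg (hk0 _ (sub_pos.mpr ht.2)) (hg t ⟨ht.1.le, ht.2.le.trans hy.2⟩)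
      | succ n ih =>
        intro y hy
        rw [Function.iterate_succ_apply']
        simp only [Kop]
        exact aux_int_nonneg hy.1 fun r hr =>
          mul_nonneg (mul_nonneg (hmu0 r hr.1) (hk0 _ (sub_pos.mpr hr.2)))
            (ih r ⟨hr.1.le, hr.2.le.trans hy.2⟩)
    simp only [Cop]
    exact tsum_nonneg fun n => hn n x hx
  -- properties of the iterates of Khat
  have hKhat_meas : Measurable (Khat k) := by
    have := aux_meas_param (F := fun _ t => k t) (hk_meas.comp measurable_snd)
    exact this
  have hKhat_mono : ∀ a b : ℝ, 0 ≤ a → a ≤ b → Khat k a ≤ Khat k b := by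
    intro a b ha hab
    rcases eq_or_lt_of_le (ha.trans hab) with hb | hb
    · have : a = b := le_antisymm hab (by rw [← hb]; exact ha)
      rw [this]
    · simp only [Khat]
      rw [intervalIntegral.integral_of_le ha, intervalIntegral.integral_of_le (ha.trans hab)]
      refine setIntegral_mono_set (hk_loc b hb) ?_
        (HasSubset.Subset.eventuallyLE (Set.Ioc_subset_Ioc_right hab))
      exact (ae_restrict_mem measurableSet_Ioc).mono fun t ht => hk0 t ht.1
  have hψ : ∀ j : ℕ, Measurable ((Iop k)^[j] (Khat k)) ∧
      (∀ y ∈ Set.Icc (0:ℝ) T, 0 ≤ (Iop k)^[j] (Khat k) y) ∧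
      (∀ a b : ℝ, 0 ≤ a → a ≤ b → b ≤ T →
        (Iop k)^[j] (Khat k) a ≤ (Iop k)^[j] (Khat k) b) := by
    intro j
    induction j with
    | zero =>
      simp only [Function.iterate_zero, id_eq]
      exact ⟨hKhat_meas, fun y hy => hKhat_nonneg y hy.1,
        fun a b ha hab _ => hKhat_mono a b ha hab⟩
    | succ j ih =>
      rw [Function.iterate_succ_apply']
      exact hI_props _ ih.1 ih.2.1 ih.2.2
  -- nonnegativity of iterates of Cop applied to 1
  have hiter_nn : ∀ j : ℕ, ∀ y ∈ Set.Icc (0:ℝ) T,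
      0 ≤ (Cop mu k)^[j] (fun _ => (1:ℝ)) y := by
    intro j
    induction j with
    | zero => intro y _; simp
    | succ j ih =>
      intro y hy
      rw [Function.iterate_succ_apply']
      exact hCnn _ ih y hy
  -- the main induction
  have main : ∀ j : ℕ, ∀ x ∈ Set.Icc (0:ℝ) T,
      (Cop mu k)^[j + 1] (fun _ => (1:ℝ)) x
        ≤ (1 / (1 - q)) ^ (j + 1) * (Iop k)^[j] (Khat k) x := by
    intro j
    induction j with
    | zero =>
      intro x hx
      have h1 := hM (fun _ => (1:ℝ)) measurable_const (fun y _ => zero_le_one)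
        (fun a b _ _ _ => le_refl 1) (fun _ => (1:ℝ))
        (fun y _ => ⟨zero_le_one, le_refl 1⟩) x hx
      have h2 : Iop k (fun _ => (1:ℝ)) x = Khat k x := by
        simp only [Iop, Khat, mul_one]
        rw [intervalIntegral.integral_comp_sub_left k x]
        simp
      rw [h2] at h1
      simpa using h1
    | succ j ih =>
      intro x hx
      rw [Function.iterate_succ_apply']
      have hps := hψ j
      have hθm : Measurable fun y => (1 / (1 - q)) ^ (j + 1) * (Iop k)^[j] (Khat k) y :=
        hps.1.const_mul _
      have hθ0 : ∀ y ∈ Set.Icc (0:ℝ) T,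
          0 ≤ (1 / (1 - q)) ^ (j + 1) * (Iop k)^[j] (Khat k) y :=
        fun y hy => mul_nonneg (pow_nonneg hc0 _) (hps.2.1 y hy)
      have hθmono : ∀ a b : ℝ, 0 ≤ a → a ≤ b → b ≤ T →
          (1 / (1 - q)) ^ (j + 1) * (Iop k)^[j] (Khat k) a
            ≤ (1 / (1 - q)) ^ (j + 1) * (Iop k)^[j] (Khat k) b :=
        fun a b ha hab hbT =>
          mul_le_mul_of_nonneg_left (hps.2.2 a b ha hab hbT) (pow_nonneg hc0 _)
      have hh : ∀ y ∈ Set.Icc (0:ℝ) T,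
          0 ≤ (Cop mu k)^[j + 1] (fun _ => (1:ℝ)) y ∧
          (Cop mu k)^[j + 1] (fun _ => (1:ℝ)) y
            ≤ (1 / (1 - q)) ^ (j + 1) * (Iop k)^[j] (Khat k) y :=
        fun y hy => ⟨hiter_nn (j + 1) y hy, ih y hy⟩
      have h1 := hM _ hθm hθ0 hθmono _ hh x hx
      have h2 : Iop k (fun y => (1 / (1 - q)) ^ (j + 1) * (Iop k)^[j] (Khat k) y) x
          = (1 / (1 - q)) ^ (j + 1) * Iop k ((Iop k)^[j] (Khat k)) x := by
        simp only [Iop]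
        rw [← intervalIntegral.integral_const_mul]
        congr 1
        funext r
        ring
      rw [h2] at h1
      calc Cop mu k ((Cop mu k)^[j + 1] (fun _ => (1:ℝ))) x
          ≤ 1 / (1 - q) * ((1 / (1 - q)) ^ (j + 1) * Iop k ((Iop k)^[j] (Khat k)) x) := h1
        _ = (1 / (1 - q)) ^ (j + 1 + 1) * Iop k ((Iop k)^[j] (Khat k)) x := by ring
        _ = (1 / (1 - q)) ^ (j + 1 + 1) * (Iop k)^[j + 1] (Khat k) x := by
            rw [Function.iterate_succ_apply']
  intro i hi x hx
  obtain ⟨j, rfl⟩ : ∃ j : ℕ, i = j + 1 := ⟨i - 1, (Nat.succ_pred_eq_of_pos hi).symm⟩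
  simp only [Nat.add_sub_cancel]
  exact main j x hx
end
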